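/- arXiv:2408.14031 — 2 statements merged into one kernel-verified Lean document; each statement's English description precedes it below -/
import Mathlib

section
/- Progress: if C ⊢ M : T | e and (C , C') ⊢ ℋ for some run-time context C', then either M is a value, or there exist M' and ℋ' with M | ℋ → M' | ℋ'. -/
/-!
Induction on the typing derivation, carrying two invariants of the context `Γ` of the subterm:
every binding of `Γ` is a location allocated in the heap (and may be closed if it holds the last
reference), and, if the subterm may have an effect, every binding `l : a` of `Γ` preceded by no
other binding of `l` admits an `op` within the specification of `l`. The second invariant comes
from heap typing: such a binding is a source of the focus graph at `l`, hence by uniqueness of the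
topological order its first vertex, so `a` is the first factor of the usage product that the heap
bounds. Weakening only removes ordering edges and so preserves minimality, and once the first
component of an application or ordered pair is a value of unrestricted type it holds no location,
so minimal bindings of the second component stay minimal.
-/

set_option autoImplicit false
set_option linter.unusedVariables false

namespace LawOrder

/-! ## Graph representations -/

structure Graph (B : Type) where
  n : ℕ
  label : ℕ → B
  edge : ℕ → ℕ → Prop
  edge_lt : ∀ i j, edge i j → i < n ∧ j < n

namespace Graph

variable {B : Type}

/-- The edge relation is acyclic. -/
def Acyclic (G : Graph B) : Prop := ∀ i, ¬ Relation.TransGen G.edge i i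

/-- The empty graph representation. -/
def zero (B : Type) [Inhabited B] : Graph B :=
  ⟨0, fun _ => default, fun _ _ => False, fun _ _ h => h.elim⟩

/-- Union of two graph representations: disjoint union, second part shifted. -/
def union (G₁ G₂ : Graph B) : Graph B where
  n := G₁.n + G₂.n
  label := fun i => if i < G₁.n then G₁.label i else G₂.label (i - G₁.n)
  edge := fun i j =>
    G₁.edge i j ∨ (G₁.n ≤ i ∧ G₁.n ≤ j ∧ G₂.edge (i - G₁.n) (j - G₁.n))
  edge_lt := by
    intro i j h
    rcases h with h | ⟨hi, hj, h⟩
    · have := G₁.edge_lt i j h; omega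
    · have := G₂.edge_lt _ _ h; omega

/-- Join of two graph representations: union plus all edges from the first
    part to the second part. -/
def join (G₁ G₂ : Graph B) : Graph B where
  n := G₁.n + G₂.n
  label := fun i => if i < G₁.n then G₁.label i else G₂.label (i - G₁.n)
  edge := fun i j =>
    G₁.edge i j ∨ (G₁.n ≤ i ∧ G₁.n ≤ j ∧ G₂.edge (i - G₁.n) (j - G₁.n)) ∨
      (i < G₁.n ∧ G₁.n ≤ j ∧ j < G₁.n + G₂.n)
  edge_lt := by
    intro i j h
    rcases h with h | ⟨hi, hj, h⟩ | ⟨hi, hj₁, hj₂⟩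
    · have := G₁.edge_lt i j h; omega
    · have := G₂.edge_lt _ _ h; omega
    · omega

/-- Isomorphism of graph representations. -/
def Iso (G₁ G₂ : Graph B) : Prop :=
  G₁.n = G₂.n ∧ ∃ f : Fin G₁.n → Fin G₁.n, Function.Bijective f ∧
    (∀ i j : Fin G₁.n, G₁.edge (f i).val (f j).val ↔ G₂.edge i.val j.val) ∧
    (∀ i : Fin G₁.n, G₁.label (f i).val = G₂.label i.val)

/-- `G₁` is a spanning graph representation of `G₂`: same vertices and labels,
    and the edges of `G₁` are contained in those of `G₂`. -/
def Spanning (G₁ G₂ : Graph B) : Prop :=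
  G₁.n = G₂.n ∧ (∀ i, i < G₁.n → G₁.label i = G₂.label i) ∧
    ∀ i j, G₁.edge i j → G₂.edge i j

/-- `f` is a topological ordering of `G`: `f` enumerates the vertices so that
    edges always point forward. -/
def IsTopOrder (G : Graph B) (f : Equiv.Perm (Fin G.n)) : Prop :=
  ∀ i j : Fin G.n, G.edge i.val j.val → f.symm i < f.symm j

/-- `G` has exactly one topological ordering. -/
def Traceable (G : Graph B) : Prop :=
  ∃! f : Equiv.Perm (Fin G.n), G.IsTopOrder f

/-- The identity enumeration is a topological ordering: all edges increase. -/
def TopOrdered (G : Graph B) : Prop := ∀ i j, G.edge i j → i < j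

/-- `k` is a union cut of `G`: no edge crosses from below `k` to `k` or above. -/
def UnionCut (G : Graph B) (k : ℕ) : Prop :=
  0 < k ∧ k < G.n ∧ ∀ i j, i < k → k ≤ j → ¬ G.edge i j

/-- `k` is a join cut of `G`: every pair crossing from below `k` to `k` or
    above (within range) is an edge. -/
def JoinCut (G : Graph B) (k : ℕ) : Prop :=
  0 < k ∧ k < G.n ∧ ∀ i j, i < k → k ≤ j → j < G.n → G.edge i j

/-- Lower part of the index cut at `k`. -/
def cutLo (G : Graph B) (k : ℕ) : Graph B where
  n := k
  label := G.label
  edge := fun i j => G.edge i j ∧ i < k ∧ j < k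
  edge_lt := fun i j h => ⟨h.2.1, h.2.2⟩

/-- Upper part of the index cut at `k` (re-indexed from 0). -/
def cutHi (G : Graph B) (k : ℕ) : Graph B where
  n := G.n - k
  label := fun i => G.label (i + k)
  edge := fun i j => G.edge (i + k) (j + k)
  edge_lt := by
    intro i j h
    have := G.edge_lt _ _ h
    omega

/-- Weak connectedness: any two vertices are joined by an undirected path. -/
def WeaklyConnected (G : Graph B) : Prop :=
  ∀ i j, i < G.n → j < G.n →
    Relation.ReflTransGen (fun a b => G.edge a b ∨ G.edge b a) i j

/-- Union of a nonempty sequence of graph representations. -/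
def unionList (G : Graph B) (L : List (Graph B)) : Graph B :=
  L.foldl union G

end Graph

/-! ## Contexts built from bindings with ordered and unordered composition -/

inductive GCtx (B : Type) where
  | empty : GCtx B
  | bind : B → GCtx B
  | comma : GCtx B → GCtx B → GCtx B
  | par : GCtx B → GCtx B → GCtx B

/-- Context patterns: contexts with a single hole. -/
inductive GPat (B : Type) where
  | hole : GPat B
  | commaL : GPat B → GCtx B → GPat B
  | commaR : GCtx B → GPat B → GPat B
  | parL : GPat B → GCtx B → GPat B
  | parR : GCtx B → GPat B → GPat B

def GPat.fill {B : Type} : GPat B → GCtx B → GCtx B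
  | .hole, Γ => Γ
  | .commaL G Δ, Γ => .comma (G.fill Γ) Δ
  | .commaR Δ G, Γ => .comma Δ (G.fill Γ)
  | .parL G Δ, Γ => .par (G.fill Γ) Δ
  | .parR Δ G, Γ => .par Δ (G.fill Γ)

def GCtx.toList {B : Type} : GCtx B → List B
  | .empty => []
  | .bind b => [b]
  | .comma Γ₁ Γ₂ => Γ₁.toList ++ Γ₂.toList
  | .par Γ₁ Γ₂ => Γ₁.toList ++ Γ₂.toList

/-- Graph part of the interpretation of a context: unrestricted bindings
    contribute no vertex, ordered bindings one vertex; `comma` is join,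
    `par` is union. -/
def GCtx.interpG {B : Type} [Inhabited B] (unr : B → Bool) : GCtx B → Graph B
  | .empty => Graph.zero B
  | .bind b =>
      if unr b then Graph.zero B
      else ⟨1, fun _ => b, fun _ _ => False, fun _ _ h => h.elim⟩
  | .comma Γ₁ Γ₂ => (interpG unr Γ₁).join (interpG unr Γ₂)
  | .par Γ₁ Γ₂ => (interpG unr Γ₁).union (interpG unr Γ₂)

/-- Set part of the interpretation of a context: the set of its
    unrestricted bindings. -/
def GCtx.unrSet {B : Type} (unr : B → Bool) : GCtx B → Set B
  | .empty => ∅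
  | .bind b => if unr b then {b} else ∅
  | .comma Γ₁ Γ₂ => unrSet unr Γ₁ ∪ unrSet unr Γ₂
  | .par Γ₁ Γ₂ => unrSet unr Γ₁ ∪ unrSet unr Γ₂

/-! ## Ordered partial monoids -/

structure OPM (α : Type) where
  mul : α → α → Option α
  eps : α
  le : α → α → Prop
  le_refl : ∀ a, le a a
  le_trans : ∀ a b c, le a b → le b c → le a c
  eps_mul : ∀ a, mul eps a = some a
  mul_eps : ∀ a, mul a eps = some a
  mul_assoc : ∀ a b c,
    (mul a b).bind (fun x => mul x c) = (mul b c).bind (fun x => mul a x)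
  mul_mono : ∀ a a' b b' c', le a a' → le b b' → mul a' b' = some c' →
    ∃ c, mul a b = some c ∧ le c c'

/-- `P.mulLe a b c` means `a ⊙ b` is defined and `a ⊙ b ≤ c`. -/
def OPM.mulLe {α : Type} (P : OPM α) (a b c : α) : Prop :=
  ∃ r, P.mul a b = some r ∧ P.le r c

/-! ## Types and effects (effects are booleans: `false` = 0, `true` = 1) -/

inductive Ty (α : Type) where
  | unit : Ty α
  | res : α → Ty α
  | arrow : Ty α → Bool → Ty α → Ty α
  | uarrow : Ty α → Bool → Ty α → Ty α
  | rarrow : Ty α → Bool → Ty α → Ty α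
  | larrow : Ty α → Bool → Ty α → Ty α
  | uprod : Ty α → Ty α → Ty α
  | oprod : Ty α → Ty α → Ty α

def Ty.unrB {α : Type} : Ty α → Bool
  | .unit => true
  | .res _ => false
  | .arrow _ _ _ => true
  | .uarrow _ _ _ => false
  | .rarrow _ _ _ => false
  | .larrow _ _ _ => false
  | .uprod S T => S.unrB && T.unrB
  | .oprod S T => S.unrB && T.unrB

/-- Unrestricted types. -/
def Ty.Unr {α : Type} (T : Ty α) : Prop := T.unrB = true

/-- Ordered types. -/
def Ty.Ord {α : Type} (T : Ty α) : Prop := T.unrB = false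

/-! ## Bindings and typing contexts -/

inductive Binding (α : Type) where
  | var : ℕ → Ty α → Binding α
  | loc : ℕ → α → Binding α

instance {α : Type} : Inhabited (Binding α) := ⟨Binding.var 0 Ty.unit⟩

def Binding.unrB {α : Type} : Binding α → Bool
  | .var _ T => T.unrB
  | .loc _ _ => false

abbrev Ctx (α : Type) := GCtx (Binding α)
abbrev CtxPat (α : Type) := GPat (Binding α)

/-- Graph part of the interpretation of a typing context. -/
def interpC {α : Type} (Γ : Ctx α) : Graph (Binding α) :=
  GCtx.interpG Binding.unrB Γ

/-- Set part of the interpretation of a typing context. -/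
def unrSetC {α : Type} (Γ : Ctx α) : Set (Binding α) :=
  GCtx.unrSet Binding.unrB Γ

/-- Subcontext relation `Γ₁ ≲ Γ₂`: up to isomorphism on both sides, the graph
    of `Γ₁` is a spanning subgraph of the graph of `Γ₂`, and the unrestricted
    set of `Γ₂` is contained in that of `Γ₁`. -/
def SubC {α : Type} (Γ₁ Γ₂ : Ctx α) : Prop :=
  (∃ G₁ G₂ : Graph (Binding α),
      Graph.Iso (interpC Γ₁) G₁ ∧ Graph.Spanning G₁ G₂ ∧ Graph.Iso G₂ (interpC Γ₂)) ∧
    unrSetC Γ₂ ⊆ unrSetC Γ₁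

def vdom {α : Type} (Γ : Ctx α) : Set ℕ :=
  {x | ∃ T, Binding.var x T ∈ GCtx.toList Γ}

def ldom {α : Type} (Γ : Ctx α) : Set ℕ :=
  {l | ∃ m, Binding.loc l m ∈ GCtx.toList Γ}

/-- All bindings of the context are unrestricted. -/
def isUnrCtx {α : Type} (Γ : Ctx α) : Prop :=
  ∀ b ∈ GCtx.toList Γ, Binding.unrB b = true

/-- Run-time contexts contain only location bindings. -/
def isRuntime {α : Type} (Γ : Ctx α) : Prop :=
  ∀ b ∈ GCtx.toList Γ, ∃ l m, b = Binding.loc l m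

/-! ## Expressions -/

inductive Const (α : Type) where
  | unit : Const α
  | new : α → Const α
  | op : α → Const α
  | split : α → α → Const α
  | drop : Const α

inductive Expr (α : Type) where
  | const : Const α → Expr α
  | loc : ℕ → Expr α
  | var : ℕ → Expr α
  | abs : ℕ → Expr α → Expr α
  | uabs : ℕ → Expr α → Expr α
  | rabs : ℕ → Expr α → Expr α
  | labs : ℕ → Expr α → Expr α
  | app : Expr α → Expr α → Expr α
  | uapp : Expr α → Expr α → Expr α
  | rapp : Expr α → Expr α → Expr α
  | lapp : Expr α → Expr α → Expr α
  | upair : Expr α → Expr α → Expr α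
  | opair : Expr α → Expr α → Expr α
  | ulet : ℕ → ℕ → Expr α → Expr α → Expr α
  | olet : ℕ → ℕ → Expr α → Expr α → Expr α

inductive IsValue {α : Type} : Expr α → Prop where
  | const : ∀ c : Const α, IsValue (Expr.const c)
  | loc : ∀ l : ℕ, IsValue (Expr.loc l)
  | abs : ∀ (x : ℕ) (M : Expr α), IsValue (Expr.abs x M)
  | uabs : ∀ (x : ℕ) (M : Expr α), IsValue (Expr.uabs x M)
  | rabs : ∀ (x : ℕ) (M : Expr α), IsValue (Expr.rabs x M)
  | labs : ∀ (x : ℕ) (M : Expr α), IsValue (Expr.labs x M)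
  | upair : ∀ V₁ V₂ : Expr α, IsValue V₁ → IsValue V₂ → IsValue (Expr.upair V₁ V₂)
  | opair : ∀ V₁ V₂ : Expr α, IsValue V₁ → IsValue V₂ → IsValue (Expr.opair V₁ V₂)

/-- Substitution `M[V/x]` (values substituted at run time are closed, so
    no capture can occur). -/
def subst {α : Type} : Expr α → Expr α → ℕ → Expr α
  | Expr.const c, _, _ => Expr.const c
  | Expr.loc l, _, _ => Expr.loc l
  | Expr.var y, V, x => if y = x then V else Expr.var y
  | Expr.abs y N, V, x => Expr.abs y (if y = x then N else subst N V x)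
  | Expr.uabs y N, V, x => Expr.uabs y (if y = x then N else subst N V x)
  | Expr.rabs y N, V, x => Expr.rabs y (if y = x then N else subst N V x)
  | Expr.labs y N, V, x => Expr.labs y (if y = x then N else subst N V x)
  | Expr.app M N, V, x => Expr.app (subst M V x) (subst N V x)
  | Expr.uapp M N, V, x => Expr.uapp (subst M V x) (subst N V x)
  | Expr.rapp M N, V, x => Expr.rapp (subst M V x) (subst N V x)
  | Expr.lapp M N, V, x => Expr.lapp (subst M V x) (subst N V x)
  | Expr.upair M N, V, x => Expr.upair (subst M V x) (subst N V x)
  | Expr.opair M N, V, x => Expr.opair (subst M V x) (subst N V x)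
  | Expr.ulet y z M N, V, x =>
      Expr.ulet y z (subst M V x) (if y = x ∨ z = x then N else subst N V x)
  | Expr.olet y z M N, V, x =>
      Expr.olet y z (subst M V x) (if y = x ∨ z = x then N else subst N V x)

/-! ## Typing (Fig. 7) -/

inductive Typing {α : Type} (P : OPM α) : Ctx α → Expr α → Ty α → Bool → Prop where
  | unit : Typing P GCtx.empty (Expr.const Const.unit) Ty.unit false
  | new : ∀ m : α,
      Typing P GCtx.empty (Expr.const (Const.new m))
        (Ty.arrow Ty.unit false (Ty.res m)) false
  | op : ∀ m₀ m₁ m₂ : α, P.mulLe m₁ m₂ m₀ →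
      Typing P GCtx.empty (Expr.const (Const.op m₁))
        (Ty.arrow (Ty.res m₀) true (Ty.res m₂)) false
  | split : ∀ m₀ m₁ m₂ : α, P.mulLe m₁ m₂ m₀ →
      Typing P GCtx.empty (Expr.const (Const.split m₁ m₂))
        (Ty.arrow (Ty.res m₀) false (Ty.oprod (Ty.res m₁) (Ty.res m₂))) false
  | drop : ∀ m : α, P.le P.eps m →
      Typing P GCtx.empty (Expr.const Const.drop)
        (Ty.arrow (Ty.res m) false Ty.unit) false
  | var : ∀ (x : ℕ) (T : Ty α),
      Typing P (GCtx.bind (Binding.var x T)) (Expr.var x) T false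
  | loc : ∀ (l : ℕ) (m : α),
      Typing P (GCtx.bind (Binding.loc l m)) (Expr.loc l) (Ty.res m) false
  | abs : ∀ (Γ : Ctx α) (x : ℕ) (S T : Ty α) (M : Expr α) (e : Bool),
      x ∉ vdom Γ → isUnrCtx Γ →
      Typing P (GCtx.comma Γ (GCtx.bind (Binding.var x S))) M T e →
      Typing P Γ (Expr.abs x M) (Ty.arrow S e T) false
  | uabs : ∀ (Γ : Ctx α) (x : ℕ) (S T : Ty α) (M : Expr α) (e : Bool),
      x ∉ vdom Γ →
      Typing P (GCtx.par Γ (GCtx.bind (Binding.var x S))) M T e →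
      Typing P Γ (Expr.uabs x M) (Ty.uarrow S e T) false
  | rabs : ∀ (Γ : Ctx α) (x : ℕ) (S T : Ty α) (M : Expr α) (e : Bool),
      x ∉ vdom Γ →
      Typing P (GCtx.comma Γ (GCtx.bind (Binding.var x S))) M T e →
      Typing P Γ (Expr.rabs x M) (Ty.rarrow S e T) false
  | labs : ∀ (Γ : Ctx α) (x : ℕ) (S T : Ty α) (M : Expr α) (e : Bool),
      x ∉ vdom Γ →
      Typing P (GCtx.comma (GCtx.bind (Binding.var x S)) Γ) M T e →
      Typing P Γ (Expr.labs x M) (Ty.larrow S e T) false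
  | app : ∀ (Γ₁ Γ₂ : Ctx α) (M N : Expr α) (S T : Ty α) (e e₁ e₂ : Bool),
      Typing P Γ₁ M (Ty.arrow S e T) e₁ → Typing P Γ₂ N S e₂ →
      Typing P (GCtx.comma Γ₁ Γ₂) (Expr.app M N) T (e || e₁ || e₂)
  | uapp : ∀ (Γ₁ Γ₂ : Ctx α) (M N : Expr α) (S T : Ty α) (e e₁ e₂ : Bool),
      Typing P Γ₁ M (Ty.uarrow S e T) e₁ → Typing P Γ₂ N S e₂ →
      Typing P (GCtx.par Γ₁ Γ₂) (Expr.uapp M N) T (e || e₁ || e₂)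
  | rapp : ∀ (Γ₁ Γ₂ : Ctx α) (M N : Expr α) (S T : Ty α) (e e₁ : Bool),
      Typing P Γ₁ M (Ty.rarrow S e T) e₁ → Typing P Γ₂ N S false →
      Typing P (GCtx.comma Γ₁ Γ₂) (Expr.rapp M N) T (e || e₁)
  | lapp : ∀ (Γ₁ Γ₂ : Ctx α) (M N : Expr α) (S T : Ty α) (e e₂ : Bool),
      Typing P Γ₂ M (Ty.larrow S e T) false → Typing P Γ₁ N S e₂ →
      Typing P (GCtx.comma Γ₁ Γ₂) (Expr.lapp M N) T (e || e₂)
  | upair : ∀ (Γ₁ Γ₂ : Ctx α) (M N : Expr α) (S T : Ty α) (e₁ e₂ : Bool),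
      Typing P Γ₁ M S e₁ → Typing P Γ₂ N T e₂ →
      Typing P (GCtx.par Γ₁ Γ₂) (Expr.upair M N) (Ty.uprod S T) (e₁ || e₂)
  | opair : ∀ (Γ₁ Γ₂ : Ctx α) (M N : Expr α) (S T : Ty α) (e₁ e₂ : Bool),
      (Ty.Ord S → e₂ = false) →
      Typing P Γ₁ M S e₁ → Typing P Γ₂ N T e₂ →
      Typing P (GCtx.comma Γ₁ Γ₂) (Expr.opair M N) (Ty.oprod S T) (e₁ || e₂)
  | ulet : ∀ (G : CtxPat α) (Γ : Ctx α) (x y : ℕ) (M N : Expr α)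
        (S₁ S₂ T : Ty α) (e : Bool),
      x ≠ y → x ∉ vdom (GPat.fill G Γ) → y ∉ vdom (GPat.fill G Γ) →
      Typing P Γ M (Ty.uprod S₁ S₂) false →
      Typing P (GPat.fill G (GCtx.par (GCtx.bind (Binding.var x S₁))
        (GCtx.bind (Binding.var y S₂)))) N T e →
      Typing P (GPat.fill G Γ) (Expr.ulet x y M N) T e
  | olet : ∀ (G : CtxPat α) (Γ : Ctx α) (x y : ℕ) (M N : Expr α)
        (S₁ S₂ T : Ty α) (e : Bool),
      x ≠ y → x ∉ vdom (GPat.fill G Γ) → y ∉ vdom (GPat.fill G Γ) →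
      Typing P Γ M (Ty.oprod S₁ S₂) false →
      Typing P (GPat.fill G (GCtx.comma (GCtx.bind (Binding.var x S₁))
        (GCtx.bind (Binding.var y S₂)))) N T e →
      Typing P (GPat.fill G Γ) (Expr.olet x y M N) T e
  | weaken : ∀ (Γ₁ Γ₂ : Ctx α) (M : Expr α) (T : Ty α) (e₁ e₂ : Bool),
      Typing P Γ₁ M T e₁ → SubC Γ₂ Γ₁ → e₁ ≤ e₂ →
      Typing P Γ₂ M T e₂

/-! ## Heaps -/

structure Heap (α : Type) where
  find : ℕ → Option (ℕ × α × α)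
  fin : Set.Finite {l | find l ≠ none}

def Heap.dom {α : Type} (H : Heap α) : Set ℕ := {l | H.find l ≠ none}

def Heap.update {α : Type} (H : Heap α) (l : ℕ) (t : ℕ × α × α) : Heap α where
  find := fun l' => if l' = l then some t else H.find l'
  fin := by
    have hsub : {l' | (if l' = l then some t else H.find l') ≠ none} ⊆
        insert l {l' | H.find l' ≠ none} := by
      intro x hx
      by_cases h : x = l
      · exact Set.mem_insert_iff.mpr (Or.inl h)
      · refine Set.mem_insert_iff.mpr (Or.inr ?_)
        simp only [Set.mem_setOf_eq, if_neg h] at hx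
        exact hx
    exact Set.Finite.subset (Set.Finite.insert l H.fin) hsub

def Heap.erase {α : Type} (H : Heap α) (l : ℕ) : Heap α where
  find := fun l' => if l' = l then none else H.find l'
  fin := by
    apply Set.Finite.subset H.fin
    intro x hx
    simp only [Set.mem_setOf_eq] at hx ⊢
    by_cases h : x = l
    · rw [if_pos h] at hx; exact absurd rfl hx
    · rw [if_neg h] at hx; exact hx

def Heap.empty (α : Type) : Heap α :=
  ⟨fun _ => none, Set.Finite.subset Set.finite_empty (fun _ hx => (hx rfl).elim)⟩

/-! ## Reduction -/

/-- Expression reduction `M →β M'`. -/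
inductive BetaStep {α : Type} : Expr α → Expr α → Prop where
  | beta : ∀ (x : ℕ) (M V : Expr α), IsValue V →
      BetaStep (Expr.app (Expr.abs x M) V) (subst M V x)
  | ubeta : ∀ (x : ℕ) (M V : Expr α), IsValue V →
      BetaStep (Expr.uapp (Expr.uabs x M) V) (subst M V x)
  | rbeta : ∀ (x : ℕ) (M V : Expr α), IsValue V →
      BetaStep (Expr.rapp (Expr.rabs x M) V) (subst M V x)
  | lbeta : ∀ (x : ℕ) (M V : Expr α), IsValue V →
      BetaStep (Expr.lapp (Expr.labs x M) V) (subst M V x)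
  | uletv : ∀ (x y : ℕ) (M V₁ V₂ : Expr α), x ≠ y → IsValue V₁ → IsValue V₂ →
      BetaStep (Expr.ulet x y (Expr.upair V₁ V₂) M) (subst (subst M V₁ x) V₂ y)
  | oletv : ∀ (x y : ℕ) (M V₁ V₂ : Expr α), x ≠ y → IsValue V₁ → IsValue V₂ →
      BetaStep (Expr.olet x y (Expr.opair V₁ V₂) M) (subst (subst M V₁ x) V₂ y)

/-- Configuration reduction `M | ℋ →γ M' | ℋ'`. -/
inductive CfgStep {α : Type} (P : OPM α) : Expr α → Heap α → Expr α → Heap α → Prop where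
  | new : ∀ (H : Heap α) (l : ℕ) (m : α), l ∉ Heap.dom H →
      CfgStep P (Expr.app (Expr.const (Const.new m)) (Expr.const Const.unit)) H
        (Expr.loc l) (H.update l (0, m, P.eps))
  | op : ∀ (H : Heap α) (l n : ℕ) (m₀ m m' m'' : α),
      H.find l = some (n, m₀, m') → P.mul m' m = some m'' →
      (∃ m₃ : α, P.mulLe m'' m₃ m₀) →
      CfgStep P (Expr.app (Expr.const (Const.op m)) (Expr.loc l)) H
        (Expr.loc l) (H.update l (n, m₀, m''))
  | cl1 : ∀ (H : Heap α) (l n : ℕ) (m₀ m : α),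
      H.find l = some (n + 1, m₀, m) →
      CfgStep P (Expr.app (Expr.const Const.drop) (Expr.loc l)) H
        (Expr.const Const.unit) (H.update l (n, m₀, m))
  | cl2 : ∀ (H : Heap α) (l : ℕ) (m₀ m : α),
      H.find l = some (0, m₀, m) → P.le m m₀ →
      CfgStep P (Expr.app (Expr.const Const.drop) (Expr.loc l)) H
        (Expr.const Const.unit) (H.erase l)
  | sp : ∀ (H : Heap α) (l n : ℕ) (m₀ m m₁ m₂ : α),
      H.find l = some (n, m₀, m) →
      CfgStep P (Expr.app (Expr.const (Const.split m₁ m₂)) (Expr.loc l)) H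
        (Expr.opair (Expr.loc l) (Expr.loc l)) (H.update l (n + 1, m₀, m))

/-- Call-by-value evaluation contexts (left-to-right, except that
    `<`-applications evaluate right-to-left). -/
inductive ECtx (α : Type) : Type where
  | hole : ECtx α
  | appL : ECtx α → Expr α → ECtx α
  | appR : (V : Expr α) → IsValue V → ECtx α → ECtx α
  | uappL : ECtx α → Expr α → ECtx α
  | uappR : (V : Expr α) → IsValue V → ECtx α → ECtx α
  | rappL : ECtx α → Expr α → ECtx α
  | rappR : (V : Expr α) → IsValue V → ECtx α → ECtx α
  | lappL : ECtx α → (V : Expr α) → IsValue V → ECtx α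
  | lappR : Expr α → ECtx α → ECtx α
  | upairL : ECtx α → Expr α → ECtx α
  | upairR : (V : Expr α) → IsValue V → ECtx α → ECtx α
  | opairL : ECtx α → Expr α → ECtx α
  | opairR : (V : Expr α) → IsValue V → ECtx α → ECtx α
  | uletE : ℕ → ℕ → ECtx α → Expr α → ECtx α
  | oletE : ℕ → ℕ → ECtx α → Expr α → ECtx α

def ECtx.plug {α : Type} : ECtx α → Expr α → Expr α
  | .hole, M => M
  | .appL E N, M => Expr.app (E.plug M) N
  | .appR V _ E, M => Expr.app V (E.plug M)
  | .uappL E N, M => Expr.uapp (E.plug M) N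
  | .uappR V _ E, M => Expr.uapp V (E.plug M)
  | .rappL E N, M => Expr.rapp (E.plug M) N
  | .rappR V _ E, M => Expr.rapp V (E.plug M)
  | .lappL E V _, M => Expr.lapp (E.plug M) V
  | .lappR N E, M => Expr.lapp N (E.plug M)
  | .upairL E N, M => Expr.upair (E.plug M) N
  | .upairR V _ E, M => Expr.upair V (E.plug M)
  | .opairL E N, M => Expr.opair (E.plug M) N
  | .opairR V _ E, M => Expr.opair V (E.plug M)
  | .uletE x y E N, M => Expr.ulet x y (E.plug M) N
  | .oletE x y E N, M => Expr.olet x y (E.plug M) N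

/-- Contextual reduction `M | ℋ → M' | ℋ'`. -/
inductive Step {α : Type} (P : OPM α) : Expr α → Heap α → Expr α → Heap α → Prop where
  | exp : ∀ (E : ECtx α) (M M' : Expr α) (H : Heap α),
      BetaStep M M' → Step P (E.plug M) H (E.plug M') H
  | cfg : ∀ (E : ECtx α) (M M' : Expr α) (H H' : Heap α),
      CfgStep P M H M' H' → Step P (E.plug M) H (E.plug M') H'

/-! ## Run-time contexts, focus, heap typing -/

/-- Focus on location `l`: replace every binding of a location other than `l`
    by the empty context. -/
def focus {α : Type} : Ctx α → ℕ → Ctx α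
  | GCtx.empty, _ => GCtx.empty
  | GCtx.bind (Binding.loc l' m), l =>
      if l' = l then GCtx.bind (Binding.loc l' m) else GCtx.empty
  | GCtx.bind (Binding.var x T), _ => GCtx.bind (Binding.var x T)
  | GCtx.comma Γ₁ Γ₂, l => GCtx.comma (focus Γ₁ l) (focus Γ₂ l)
  | GCtx.par Γ₁ Γ₂, l => GCtx.par (focus Γ₁ l) (focus Γ₂ l)

/-- A run-time context is order-defined if every focus graph has a unique
    topological ordering. -/
def orderDefined {α : Type} (Γ : Ctx α) : Prop :=
  ∀ l : ℕ, Graph.Traceable (interpC (focus Γ l))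

def bUsage {α : Type} (P : OPM α) : Binding α → α
  | Binding.loc _ m => m
  | Binding.var _ _ => P.eps

def listProd {α : Type} (P : OPM α) : List α → Option α
  | [] => some P.eps
  | m :: ms => (listProd P ms).bind fun r => P.mul m r

/-- `focusUsage P Γ l u` : the usage projection of `⟨Γ⟩_l` is defined and
    equal to `u` (the ⊙-product of the usages along a topological ordering of
    the focus graph). -/
def focusUsage {α : Type} (P : OPM α) (Γ : Ctx α) (l : ℕ) (u : α) : Prop :=
  ∃ f : Equiv.Perm (Fin (interpC (focus Γ l)).n),
    Graph.IsTopOrder (interpC (focus Γ l)) f ∧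
      listProd P (List.ofFn fun k =>
        bUsage P ((interpC (focus Γ l)).label (f k).val)) = some u

/-- Heap typing `C ⊢ ℋ`. -/
def HeapTy {α : Type} (P : OPM α) (C : Ctx α) (H : Heap α) : Prop :=
  orderDefined C ∧
  ldom C = Heap.dom H ∧
  ∀ (l n : ℕ) (m₀ m : α), H.find l = some (n, m₀, m) →
    (interpC (focus C l)).n = n + 1 ∧
    ∃ u r : α, focusUsage P C l u ∧ P.mul m u = some r ∧ P.le r m₀


namespace Graph

variable {B : Type} {G H G₁ G₂ : Graph B}

def labels (G : Graph B) : Set B := {b | ∃ i < G.n, G.label i = b}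

def IsMinimalAmong (G : Graph B) (p : B → Prop) (b : B) : Prop :=
  ∃ i < G.n, G.label i = b ∧ ∀ j, p (G.label j) → ¬ G.edge j i

theorem join_label_of_lt {i : ℕ} (h : i < G₁.n) : (G₁.join G₂).label i = G₁.label i :=
  if_pos h

theorem join_label_add (i : ℕ) : (G₁.join G₂).label (G₁.n + i) = G₂.label i := by
  simp [join]

theorem union_label_of_lt {i : ℕ} (h : i < G₁.n) : (G₁.union G₂).label i = G₁.label i :=
  join_label_of_lt h

theorem union_label_add (i : ℕ) : (G₁.union G₂).label (G₁.n + i) = G₂.label i :=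
  join_label_add i

theorem labels_join : (G₁.join G₂).labels = G₁.labels ∪ G₂.labels := by
  ext b
  constructor
  · rintro ⟨i, hi, rfl⟩
    by_cases h : i < G₁.n
    · exact Or.inl ⟨i, h, (join_label_of_lt h).symm⟩
    · obtain ⟨k, rfl⟩ := Nat.exists_eq_add_of_le (not_lt.1 h)
      exact Or.inr ⟨k, by simp only [join] at hi; omega, (join_label_add k).symm⟩
  · rintro (⟨i, hi, rfl⟩ | ⟨i, hi, rfl⟩)
    · exact ⟨i, by simp only [join]; omega, join_label_of_lt hi⟩
    · exact ⟨G₁.n + i, by simp only [join]; omega, join_label_add i⟩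

theorem labels_union : (G₁.union G₂).labels = G₁.labels ∪ G₂.labels :=
  labels_join

theorem isMinimalAmong_join {p : B → Prop} {b : B} :
    (G₁.join G₂).IsMinimalAmong p b ↔
      G₁.IsMinimalAmong p b ∨ ((∀ j < G₁.n, ¬ p (G₁.label j)) ∧ G₂.IsMinimalAmong p b) := by
  constructor
  · rintro ⟨k, hk, rfl, hmin⟩
    by_cases h : k < G₁.n
    · refine Or.inl ⟨k, h, (join_label_of_lt h).symm, fun j hj he => hmin j ?_ (Or.inl he)⟩
      rwa [join_label_of_lt (G₁.edge_lt j k he).1]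
    · obtain ⟨k, rfl⟩ := Nat.exists_eq_add_of_le (not_lt.1 h)
      simp only [join] at hk
      refine Or.inr ⟨fun j hj hp => hmin j ?_ (Or.inr (Or.inr ⟨hj, by omega, by omega⟩)),
        k, by omega, (join_label_add k).symm, fun j hp he => hmin (G₁.n + j) ?_ ?_⟩
      · rwa [join_label_of_lt hj]
      · rwa [join_label_add]
      · exact Or.inr (Or.inl ⟨by omega, by omega, by simpa using he⟩)
  · rintro (⟨i, hi, rfl, hmin⟩ | ⟨hnone, i, hi, rfl, hmin⟩)
    · refine ⟨i, by simp only [join]; omega, join_label_of_lt hi, ?_⟩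
      rintro j hp (he | ⟨_, hi', _⟩ | ⟨_, hi', _⟩)
      · exact hmin j (by rwa [join_label_of_lt (G₁.edge_lt j i he).1] at hp) he
      all_goals omega
    · refine ⟨G₁.n + i, by simp only [join]; omega, join_label_add i, ?_⟩
      rintro j hp (he | ⟨hj, _, he⟩ | ⟨hj, _, _⟩)
      · have := (G₁.edge_lt _ _ he).2; omega
      · obtain ⟨j, rfl⟩ := Nat.exists_eq_add_of_le hj
        rw [join_label_add] at hp
        exact hmin j hp (by simpa using he)
      · exact hnone j hj (by rwa [join_label_of_lt hj] at hp)

theorem isMinimalAmong_union {p : B → Prop} {b : B} :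
    (G₁.union G₂).IsMinimalAmong p b ↔ G₁.IsMinimalAmong p b ∨ G₂.IsMinimalAmong p b := by
  constructor
  · rintro ⟨k, hk, rfl, hmin⟩
    by_cases h : k < G₁.n
    · refine Or.inl ⟨k, h, (union_label_of_lt h).symm, fun j hj he => hmin j ?_ (Or.inl he)⟩
      rwa [union_label_of_lt (G₁.edge_lt j k he).1]
    · obtain ⟨k, rfl⟩ := Nat.exists_eq_add_of_le (not_lt.1 h)
      simp only [union] at hk
      refine Or.inr ⟨k, by omega, (union_label_add k).symm, fun j hp he => hmin (G₁.n + j) ?_ ?_⟩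
      · rwa [union_label_add]
      · exact Or.inr ⟨by omega, by omega, by simpa using he⟩
  · rintro (⟨i, hi, rfl, hmin⟩ | ⟨i, hi, rfl, hmin⟩)
    · refine ⟨i, by simp only [union]; omega, union_label_of_lt hi, ?_⟩
      rintro j hp (he | ⟨_, hi', _⟩)
      · exact hmin j (by rwa [union_label_of_lt (G₁.edge_lt j i he).1] at hp) he
      · omega
    · refine ⟨G₁.n + i, by simp only [union]; omega, union_label_add i, ?_⟩
      rintro j hp (he | ⟨hj, _, he⟩)
      · have := (G₁.edge_lt _ _ he).2; omega
      · obtain ⟨j, rfl⟩ := Nat.exists_eq_add_of_le hj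
        rw [union_label_add] at hp
        exact hmin j hp (by simpa using he)

theorem Iso.labels_eq (h : Iso G H) : G.labels = H.labels := by
  obtain ⟨hn, f, hf, -, hlab⟩ := h
  ext b
  constructor
  · rintro ⟨k, hk, rfl⟩
    obtain ⟨i, hi⟩ := hf.2 ⟨k, hk⟩
    exact ⟨i, hn ▸ i.isLt, by rw [← hlab, hi]⟩
  · rintro ⟨i, hi, rfl⟩
    exact ⟨f ⟨i, hn ▸ hi⟩, (f _).isLt, hlab _⟩

theorem Iso.isMinimalAmong_iff (h : Iso G H) {p : B → Prop} {b : B} :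
    G.IsMinimalAmong p b ↔ H.IsMinimalAmong p b := by
  obtain ⟨hn, f, hf, hedge, hlab⟩ := h
  constructor
  · rintro ⟨k, hk, rfl, hmin⟩
    obtain ⟨i, hi⟩ := hf.2 ⟨k, hk⟩
    obtain rfl : k = f i := congrArg Fin.val hi.symm
    refine ⟨i, hn ▸ i.isLt, (hlab i).symm, fun j hp he => ?_⟩
    have hj : j < G.n := hn ▸ (H.edge_lt j i he).1
    exact hmin (f ⟨j, hj⟩) (by rwa [hlab]) ((hedge ⟨j, hj⟩ i).2 he)
  · rintro ⟨i, hi, rfl, hmin⟩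
    refine ⟨f ⟨i, hn ▸ hi⟩, (f _).isLt, hlab _, fun j hp he => ?_⟩
    obtain ⟨j', hj'⟩ := hf.2 ⟨j, (G.edge_lt _ _ he).1⟩
    obtain rfl : j = f j' := congrArg Fin.val hj'.symm
    exact hmin j' (by rwa [← hlab]) ((hedge j' _).1 he)

theorem Spanning.labels_eq (h : Spanning G₁ G₂) : G₁.labels = G₂.labels := by
  obtain ⟨hn, hlab, -⟩ := h
  ext b
  constructor
  · rintro ⟨i, hi, rfl⟩
    exact ⟨i, hn ▸ hi, (hlab i hi).symm⟩
  · rintro ⟨i, hi, rfl⟩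
    exact ⟨i, hn ▸ hi, hlab i (hn ▸ hi)⟩

theorem Spanning.isMinimalAmong (h : Spanning G₁ G₂) {p : B → Prop} {b : B}
    (hmin : G₂.IsMinimalAmong p b) : G₁.IsMinimalAmong p b := by
  obtain ⟨hn, hlab, hedge⟩ := h
  obtain ⟨i, hi, rfl, hmin⟩ := hmin
  refine ⟨i, hn ▸ hi, hlab i (hn ▸ hi), fun j hp he => hmin j ?_ (hedge j i he)⟩
  rwa [← hlab j (G₁.edge_lt j i he).1]

theorem TopOrdered.join (h₁ : G₁.TopOrdered) (h₂ : G₂.TopOrdered) :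
    (G₁.join G₂).TopOrdered := by
  rintro i j (he | ⟨_, _, he⟩ | ⟨_, _, _⟩)
  · exact h₁ i j he
  · have := h₂ _ _ he; omega
  · omega

theorem TopOrdered.union (h₁ : G₁.TopOrdered) (h₂ : G₂.TopOrdered) :
    (G₁.union G₂).TopOrdered := by
  rintro i j (he | ⟨_, _, he⟩)
  · exact h₁ i j he
  · have := h₂ _ _ he; omega

theorem Traceable.eq_one (ht : G.Traceable) (hto : G.TopOrdered)
    {f : Equiv.Perm (Fin G.n)} (hf : G.IsTopOrder f) : f = 1 :=
  ht.unique hf fun i j he => hto i j he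

/-- The cycle `(0 1 ⋯ i)` of `Fin.cycleRange` moves a source `i` to the front without breaking
forward edges; uniqueness of the topological order then forces `i = 0`. -/
theorem Traceable.eq_zero_of_source (ht : G.Traceable) (hto : G.TopOrdered) {i : ℕ}
    (hi : i < G.n) (hsrc : ∀ j, ¬ G.edge j i) : i = 0 := by
  set c : Fin G.n := ⟨i, hi⟩
  have hval : ∀ j : Fin G.n, (Fin.cycleRange c j : ℕ) =
      if (j : ℕ) < i then (j : ℕ) + 1 else if (j : ℕ) = i then (0 : ℕ) else (j : ℕ) := by
    intro j
    rcases lt_trichotomy j c with h | rfl | h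
    · rw [Fin.coe_cycleRange_of_lt h, if_pos (Fin.lt_def.1 h)]
    · simp [c, Fin.coe_cycleRange_of_le le_rfl]
    · rw [Fin.cycleRange_of_gt h]
      have := Fin.lt_def.1 h
      simp only [c] at this
      rw [if_neg (by omega), if_neg (by omega)]
  have hcycle : G.IsTopOrder (Fin.cycleRange c).symm := by
    intro x y he
    have hxy := hto _ _ he
    have hy : (y : ℕ) ≠ i := fun h => hsrc x (h ▸ he)
    rw [Equiv.symm_symm, Fin.lt_def, hval, hval]
    split_ifs <;> omega
  have h1 : Fin.cycleRange c = (1 : Equiv.Perm (Fin G.n)) := by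
    rw [← Equiv.symm_symm (Fin.cycleRange c), ht.eq_one hto hcycle]
    rfl
  have := hval c
  rw [h1] at this
  simpa [c] using this

end Graph

section Contexts

variable {α : Type} {Γ Γ₁ Γ₂ : Ctx α} {b : Binding α} {l : ℕ} {a : α}

theorem topOrdered_interpC (Γ : Ctx α) : (interpC Γ).TopOrdered := by
  induction Γ with
  | empty => exact fun _ _ h => h.elim
  | bind b =>
      intro i j h
      simp only [interpC, GCtx.interpG] at h
      split at h <;> exact h.elim
  | comma _ _ ih₁ ih₂ => exact ih₁.join ih₂
  | par _ _ ih₁ ih₂ => exact ih₁.union ih₂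

theorem mem_labels_interpC : b ∈ (interpC Γ).labels ↔ b ∈ Γ.toList ∧ b.unrB = false := by
  induction Γ with
  | empty => simp [interpC, GCtx.interpG, Graph.labels, Graph.zero, GCtx.toList]
  | bind b' =>
      simp only [interpC, GCtx.interpG, GCtx.toList, List.mem_singleton]
      split <;> simp_all [Graph.labels, Graph.zero]
  | comma _ _ ih₁ ih₂ =>
      simp only [interpC, GCtx.interpG, Graph.labels_join] at ih₁ ih₂ ⊢
      simp only [Set.mem_union, ih₁, ih₂, GCtx.toList, List.mem_append]
      tauto
  | par _ _ ih₁ ih₂ =>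
      simp only [interpC, GCtx.interpG, Graph.labels_union] at ih₁ ih₂ ⊢
      simp only [Set.mem_union, ih₁, ih₂, GCtx.toList, List.mem_append]
      tauto

theorem mem_unrSetC : b ∈ unrSetC Γ ↔ b ∈ Γ.toList ∧ b.unrB = true := by
  induction Γ with
  | empty => simp [unrSetC, GCtx.unrSet, GCtx.toList]
  | bind b' =>
      simp only [unrSetC, GCtx.unrSet, GCtx.toList, List.mem_singleton]
      split <;> simp_all
  | comma _ _ ih₁ ih₂ =>
      simp only [unrSetC, GCtx.unrSet] at ih₁ ih₂ ⊢
      simp only [Set.mem_union, ih₁, ih₂, GCtx.toList, List.mem_append]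
      tauto
  | par _ _ ih₁ ih₂ =>
      simp only [unrSetC, GCtx.unrSet] at ih₁ ih₂ ⊢
      simp only [Set.mem_union, ih₁, ih₂, GCtx.toList, List.mem_append]
      tauto

theorem SubC.labels_eq (h : SubC Γ₂ Γ₁) : (interpC Γ₂).labels = (interpC Γ₁).labels := by
  obtain ⟨⟨G₁, G₂, h₁, hs, h₂⟩, -⟩ := h
  rw [h₁.labels_eq, hs.labels_eq, h₂.labels_eq]

theorem SubC.toList_subset (h : SubC Γ₂ Γ₁) : Γ₁.toList ⊆ Γ₂.toList := by
  intro b hb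
  cases hub : b.unrB
  · exact (mem_labels_interpC.1 (h.labels_eq ▸ mem_labels_interpC.2 ⟨hb, hub⟩)).1
  · exact (mem_unrSetC.1 (h.2 (mem_unrSetC.2 ⟨hb, hub⟩))).1

theorem SubC.ldom_subset (h : SubC Γ₂ Γ₁) : ldom Γ₂ ⊆ ldom Γ₁ := by
  rintro l ⟨m, hm⟩
  exact ⟨m, (mem_labels_interpC.1 (h.labels_eq ▸ mem_labels_interpC.2 ⟨hm, rfl⟩)).1⟩

theorem GPat.toList_subset_fill (G : CtxPat α) (Γ : Ctx α) : Γ.toList ⊆ (G.fill Γ).toList := by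
  induction G with
  | hole => exact List.Subset.refl _
  | commaL _ _ ih | parL _ _ ih => exact List.Subset.trans ih (List.subset_append_left _ _)
  | commaR _ _ ih | parR _ _ ih => exact List.Subset.trans ih (List.subset_append_right _ _)

theorem mem_toList_focus :
    b ∈ (focus Γ l).toList ↔ b ∈ Γ.toList ∧ ∀ l' m, b = .loc l' m → l' = l := by
  induction Γ with
  | empty => simp [focus, GCtx.toList]
  | bind b' =>
      cases b' with
      | var => aesop (add norm [focus, GCtx.toList])
      | loc l' m => by_cases h : l' = l <;> aesop (add norm [focus, GCtx.toList])
  | comma _ _ ih₁ ih₂ | par _ _ ih₁ ih₂ =>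
      simp only [focus, GCtx.toList, List.mem_append, ih₁, ih₂]
      tauto

end Contexts

section MinimalLoc

variable {α : Type} {Γ Γ₁ Γ₂ : Ctx α} {l : ℕ} {a : α}

inductive MinimalLoc (l : ℕ) (a : α) : Ctx α → Prop
  | bind : MinimalLoc l a (.bind (.loc l a))
  | commaL {Γ₁ : Ctx α} (Γ₂ : Ctx α) : MinimalLoc l a Γ₁ → MinimalLoc l a (.comma Γ₁ Γ₂)
  | commaR {Γ₁ Γ₂ : Ctx α} : l ∉ ldom Γ₁ → MinimalLoc l a Γ₂ → MinimalLoc l a (.comma Γ₁ Γ₂)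
  | parL {Γ₁ : Ctx α} (Γ₂ : Ctx α) : MinimalLoc l a Γ₁ → MinimalLoc l a (.par Γ₁ Γ₂)
  | parR (Γ₁ : Ctx α) {Γ₂ : Ctx α} : MinimalLoc l a Γ₂ → MinimalLoc l a (.par Γ₁ Γ₂)

def IsLocOf (l : ℕ) (b : Binding α) : Prop := ∃ m, b = .loc l m

theorem not_mem_ldom_iff :
    l ∉ ldom Γ ↔ ∀ j < (interpC Γ).n, ¬ IsLocOf l ((interpC Γ).label j) := by
  constructor
  · rintro hl j hj ⟨m, hm⟩
    exact hl ⟨m, (mem_labels_interpC.1 ⟨j, hj, hm⟩).1⟩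
  · rintro h ⟨m, hm⟩
    obtain ⟨j, hj, hlab⟩ := mem_labels_interpC.2 ⟨hm, rfl⟩
    exact h j hj ⟨m, hlab⟩

theorem minimalLoc_iff :
    MinimalLoc l a Γ ↔ (interpC Γ).IsMinimalAmong (IsLocOf l) (.loc l a) := by
  induction Γ with
  | empty =>
      constructor
      · intro h
        cases h
      · rintro ⟨_, hi, _⟩
        exact absurd hi (Nat.not_lt_zero _)
  | bind b =>
      constructor
      · rintro ⟨⟩
        exact ⟨0, by simp [interpC, GCtx.interpG, Binding.unrB], by
          simp [interpC, GCtx.interpG, Binding.unrB], fun _ _ h => by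
          simp [interpC, GCtx.interpG, Binding.unrB] at h⟩
      · rintro ⟨i, hi, hlab, -⟩
        cases hb : b.unrB
        · simp only [interpC, GCtx.interpG, hb, Bool.false_eq_true, if_false] at hlab
          exact hlab ▸ .bind
        · simp [interpC, GCtx.interpG, hb, Graph.zero] at hi
  | comma Γ₁ Γ₂ ih₁ ih₂ =>
      rw [show interpC (.comma Γ₁ Γ₂) = (interpC Γ₁).join (interpC Γ₂) from rfl,
        Graph.isMinimalAmong_join, ← ih₁, ← ih₂, ← not_mem_ldom_iff]
      constructor
      · intro h
        cases h with
        | commaL _ h => exact Or.inl h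
        | commaR hl h => exact Or.inr ⟨hl, h⟩
      · rintro (h | ⟨hl, h⟩)
        exacts [.commaL _ h, .commaR hl h]
  | par Γ₁ Γ₂ ih₁ ih₂ =>
      rw [show interpC (.par Γ₁ Γ₂) = (interpC Γ₁).union (interpC Γ₂) from rfl,
        Graph.isMinimalAmong_union, ← ih₁, ← ih₂]
      constructor
      · intro h
        cases h with
        | parL _ h => exact Or.inl h
        | parR _ h => exact Or.inr h
      · rintro (h | h)
        exacts [.parL _ h, .parR _ h]

/-- The weaker context has fewer ordering edges. -/
theorem MinimalLoc.of_subC (h : SubC Γ₂ Γ₁) (hmin : MinimalLoc l a Γ₁) : MinimalLoc l a Γ₂ := by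
  obtain ⟨⟨G₁, G₂, h₁, hs, h₂⟩, -⟩ := h
  rw [minimalLoc_iff] at hmin ⊢
  exact h₁.isMinimalAmong_iff.2 (hs.isMinimalAmong (h₂.isMinimalAmong_iff.2 hmin))

theorem MinimalLoc.mem_toList (h : MinimalLoc l a Γ) : .loc l a ∈ Γ.toList := by
  induction h with
  | bind => exact List.mem_singleton_self _
  | commaL _ _ ih | parL _ _ ih => exact List.mem_append_left _ ih
  | commaR _ _ ih | parR _ _ ih => exact List.mem_append_right _ ih

theorem minimalLoc_focus (h : MinimalLoc l a Γ) : MinimalLoc l a (focus Γ l) := by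
  induction h with
  | bind => simpa [LawOrder.focus] using MinimalLoc.bind
  | commaL _ _ ih => exact .commaL _ ih
  | commaR hl _ ih =>
      exact .commaR (fun ⟨m, hm⟩ => hl ⟨m, (mem_toList_focus.1 hm).1⟩) ih
  | parL _ _ ih => exact .parL _ ih
  | parR _ _ ih => exact .parR _ ih

/-- The focus graph of a run-time context at `l` has only bindings of `l` as vertices. -/
theorem MinimalLoc.exists_source_focus (hrt : isRuntime Γ) (h : MinimalLoc l a Γ) :
    ∃ i < (interpC (focus Γ l)).n, (interpC (focus Γ l)).label i = .loc l a ∧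
      ∀ j, ¬ (interpC (focus Γ l)).edge j i := by
  obtain ⟨i, hi, hlab, hmin⟩ := minimalLoc_iff.1 (minimalLoc_focus h)
  refine ⟨i, hi, hlab, fun j he => hmin j ?_ he⟩
  have hj := (mem_labels_interpC.1 ⟨j, ((interpC _).edge_lt j i he).1, rfl⟩).1
  obtain ⟨hmem, hl⟩ := mem_toList_focus.1 hj
  obtain ⟨l', m, hm⟩ := hrt _ hmem
  exact ⟨m, hm ▸ hl l' m hm ▸ rfl⟩

end MinimalLoc

namespace OPM

variable {α : Type} (P : OPM α)

theorem mul_assoc_left {a b c s r : α} (hbc : P.mul b c = some s) (ha : P.mul a s = some r) :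
    ∃ w, P.mul a b = some w ∧ P.mul w c = some r := by
  have h := P.mul_assoc a b c
  rw [hbc, Option.bind_some, ha] at h
  exact Option.bind_eq_some_iff.1 h

theorem mul_assoc_right {a b c w r : α} (hab : P.mul a b = some w) (hc : P.mul w c = some r) :
    ∃ s, P.mul b c = some s ∧ P.mul a s = some r := by
  have h := P.mul_assoc a b c
  rw [hab, Option.bind_some, hc] at h
  exact Option.bind_eq_some_iff.1 h.symm

/-- The witness is `m₃ = m₂ ⊙ v`, by `(m ⊙ m₁) ⊙ (m₂ ⊙ v) ≤ (m ⊙ a) ⊙ v ≤ m₀`. -/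
theorem exists_mulLe_mul {m a w v m₀ m₁ m₂ : α} (h₁₂ : P.mulLe m₁ m₂ a)
    (hw : P.mul m a = some w) (hwv : P.mulLe w v m₀) :
    ∃ m', P.mul m m₁ = some m' ∧ ∃ m₃, P.mulLe m' m₃ m₀ := by
  obtain ⟨p, hp, hpa⟩ := h₁₂
  obtain ⟨r, hr, hrm₀⟩ := hwv
  obtain ⟨c, hc, hcw⟩ := P.mul_mono m m p a w (P.le_refl m) hpa hw
  obtain ⟨d, hd, hdr⟩ := P.mul_mono c w v v r hcw (P.le_refl v) hr
  obtain ⟨m', hm', hm'c⟩ := P.mul_assoc_left hp hc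
  obtain ⟨y, -, hm'y⟩ := P.mul_assoc_right hm'c hd
  exact ⟨m', hm', y, d, hm'y, P.le_trans _ _ _ hdr hrm₀⟩

theorem le_of_mulLe_of_eps_le {m a m₀ : α} (h : P.mulLe m a m₀) (hε : P.le P.eps a) :
    P.le m m₀ := by
  obtain ⟨r, hr, hrm₀⟩ := h
  obtain ⟨c, hc, hcr⟩ := P.mul_mono m m P.eps a r (P.le_refl m) hε hr
  rw [P.mul_eps, Option.some_inj] at hc
  exact P.le_trans _ _ _ (hc ▸ hcr) hrm₀

end OPM

section Heap

variable {α : Type} {P : OPM α} {C : Ctx α} {H : Heap α} {l n : ℕ} {a m m₀ : α}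

/-- A reference count `n = 0` means that the binding of usage `a` is the only reference to `l`. -/
def Closable (P : OPM α) (H : Heap α) (l : ℕ) (a : α) : Prop :=
  ∃ n m₀ m, H.find l = some (n, m₀, m) ∧ (n = 0 → P.mulLe m a m₀)

def Usable (P : OPM α) (H : Heap α) (l : ℕ) (a : α) : Prop :=
  ∃ n m₀ m w v, H.find l = some (n, m₀, m) ∧ P.mul m a = some w ∧ P.mulLe w v m₀

theorem Closable.exists_split (h : Closable P H l a) (m₁ m₂ : α) :
    ∃ H', CfgStep P (.app (.const (.split m₁ m₂)) (.loc l)) H (.opair (.loc l) (.loc l)) H' := by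
  obtain ⟨n, m₀, m, hfind, -⟩ := h
  exact ⟨_, .sp H l n m₀ m m₁ m₂ hfind⟩

theorem Closable.exists_drop (h : Closable P H l a) (hε : P.le P.eps a) :
    ∃ H', CfgStep P (.app (.const .drop) (.loc l)) H (.const .unit) H' := by
  obtain ⟨n, m₀, m, hfind, hclose⟩ := h
  cases n with
  | zero => exact ⟨_, .cl2 H l m₀ m hfind (P.le_of_mulLe_of_eps_le (hclose rfl) hε)⟩
  | succ n => exact ⟨_, .cl1 H l n m₀ m hfind⟩

theorem Usable.exists_op {m₁ m₂ : α} (h : Usable P H l a) (h₁₂ : P.mulLe m₁ m₂ a) :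
    ∃ H', CfgStep P (.app (.const (.op m₁)) (.loc l)) H (.loc l) H' := by
  obtain ⟨n, m₀, m, w, v, hfind, hw, hwv⟩ := h
  obtain ⟨m', hm', hm'₀⟩ := P.exists_mulLe_mul h₁₂ hw hwv
  exact ⟨_, .op H l n m₀ m₁ m m' hfind hm' hm'₀⟩

theorem listProd_ofFn_eq_some {N : ℕ} (hN : N = n + 1) (g : Fin N → α) {u : α}
    (h : listProd P (List.ofFn g) = some u) :
    ∃ v, P.mul (g ⟨0, by omega⟩) v = some u ∧ (n = 0 → v = P.eps) := by
  subst hN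
  rw [List.ofFn_succ] at h
  obtain ⟨v, hv, hmul⟩ := Option.bind_eq_some_iff.1 h
  refine ⟨v, hmul, ?_⟩
  rintro rfl
  simpa [listProd] using hv.symm

theorem HeapTy.exists_find (hH : HeapTy P C H) (hmem : .loc l a ∈ C.toList) :
    ∃ t, H.find l = some t :=
  Option.ne_none_iff_exists'.1 (hH.2.1 ▸ ⟨a, hmem⟩ : l ∈ H.dom)

/-- A source of the focus graph comes first in its unique topological order, so its usage
`a` is the first factor of the usage product `a ⊙ v` constrained by the heap typing. -/
theorem HeapTy.source_usage (hH : HeapTy P C H) (hfind : H.find l = some (n, m₀, m))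
    {i : ℕ} (hi : i < (interpC (focus C l)).n)
    (hlab : (interpC (focus C l)).label i = .loc l a)
    (hsrc : ∀ j, ¬ (interpC (focus C l)).edge j i) :
    ∃ w v, P.mul m a = some w ∧ P.mulLe w v m₀ ∧ (n = 0 → v = P.eps) := by
  obtain ⟨hord, -, hent⟩ := hH
  obtain ⟨hn, u, r, ⟨f, hf, hprod⟩, hmu, hrm₀⟩ := hent l n m₀ m hfind
  have hto := topOrdered_interpC (focus C l)
  obtain rfl := (hord l).eq_one hto hf
  obtain rfl := (hord l).eq_zero_of_source hto hi hsrc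
  obtain ⟨v, hav, hv⟩ := listProd_ofFn_eq_some hn _ hprod
  rw [Equiv.Perm.one_apply, hlab] at hav
  obtain ⟨w, hw, hwv⟩ := P.mul_assoc_left hav hmu
  exact ⟨w, v, hw, ⟨r, hwv, hrm₀⟩, hv⟩

theorem HeapTy.closable (hH : HeapTy P C H) (hmem : .loc l a ∈ C.toList) :
    Closable P H l a := by
  obtain ⟨⟨n, m₀, m⟩, hfind⟩ := hH.exists_find hmem
  refine ⟨n, m₀, m, hfind, ?_⟩
  rintro rfl
  have hn := (hH.2.2 l 0 m₀ m hfind).1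
  obtain ⟨i, hi, hlab⟩ := mem_labels_interpC.2
    ⟨mem_toList_focus.2 ⟨hmem, fun _ _ h => (Binding.loc.inj h).1.symm⟩, rfl⟩
  -- the focus graph has a single vertex, which is then a source
  have hsrc : ∀ j, ¬ (interpC (focus C l)).edge j i := fun j he => by
    have := topOrdered_interpC _ j i he
    omega
  obtain ⟨w, v, hw, ⟨r, hr, hrm₀⟩, hv⟩ := hH.source_usage hfind hi hlab hsrc
  rw [hv rfl, P.mul_eps, Option.some_inj] at hr
  exact ⟨w, hw, hr ▸ hrm₀⟩

theorem HeapTy.usable (hH : HeapTy P C H) (hrt : isRuntime C) (hmin : MinimalLoc l a C) :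
    Usable P H l a := by
  obtain ⟨⟨n, m₀, m⟩, hfind⟩ := hH.exists_find hmin.mem_toList
  obtain ⟨i, hi, hlab, hsrc⟩ := hmin.exists_source_focus hrt
  obtain ⟨w, v, hw, hwv, -⟩ := hH.source_usage hfind hi hlab hsrc
  exact ⟨n, m₀, m, w, v, hfind, hw, hwv⟩

end Heap

section Typing

variable {α : Type} {P : OPM α} {Γ : Ctx α} {M V : Expr α} {T : Ty α} {e : Bool}

inductive Canonical (P : OPM α) : Expr α → Ty α → Prop
  | unit : Canonical P (.const .unit) .unit
  | new (m : α) : Canonical P (.const (.new m)) (.arrow .unit false (.res m))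
  | op {m₀ m₁ m₂ : α} : P.mulLe m₁ m₂ m₀ →
      Canonical P (.const (.op m₁)) (.arrow (.res m₀) true (.res m₂))
  | split (m₀ m₁ m₂ : α) :
      Canonical P (.const (.split m₁ m₂)) (.arrow (.res m₀) false (.oprod (.res m₁) (.res m₂)))
  | drop {m : α} : P.le P.eps m → Canonical P (.const .drop) (.arrow (.res m) false .unit)
  | loc (l : ℕ) (m : α) : Canonical P (.loc l) (.res m)
  | abs (x : ℕ) (M : Expr α) (S : Ty α) (e : Bool) (T : Ty α) :
      Canonical P (.abs x M) (.arrow S e T)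
  | uabs (x : ℕ) (M : Expr α) (S : Ty α) (e : Bool) (T : Ty α) :
      Canonical P (.uabs x M) (.uarrow S e T)
  | rabs (x : ℕ) (M : Expr α) (S : Ty α) (e : Bool) (T : Ty α) :
      Canonical P (.rabs x M) (.rarrow S e T)
  | labs (x : ℕ) (M : Expr α) (S : Ty α) (e : Bool) (T : Ty α) :
      Canonical P (.labs x M) (.larrow S e T)
  | upair (V₁ V₂ : Expr α) (S T : Ty α) : Canonical P (.upair V₁ V₂) (.uprod S T)
  | opair (V₁ V₂ : Expr α) (S T : Ty α) : Canonical P (.opair V₁ V₂) (.oprod S T)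

theorem Typing.canonical (h : Typing P Γ V T e) (hV : IsValue V) : Canonical P V T := by
  induction h with
  | unit => exact .unit
  | new m => exact .new m
  | op _ _ _ h => exact .op h
  | split m₀ m₁ m₂ => exact .split m₀ m₁ m₂
  | drop _ h => exact .drop h
  | loc l m => exact .loc l m
  | abs _ x S T M e => exact .abs x M S e T
  | uabs _ x S T M e => exact .uabs x M S e T
  | rabs _ x S T M e => exact .rabs x M S e T
  | labs _ x S T M e => exact .labs x M S e T
  | upair _ _ M N S T => exact .upair M N S T
  | opair _ _ M N S T => exact .opair M N S T
  | weaken _ _ _ _ _ _ _ _ _ ih => exact ih hV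
  | _ => cases hV

theorem Typing.minimalLoc (h : Typing P Γ M T e) {l : ℕ} {m : α} (hM : M = .loc l)
    (hT : T = .res m) : MinimalLoc l m Γ := by
  induction h with
  | loc =>
      cases hM
      cases hT
      exact .bind
  | weaken _ _ _ _ _ _ _ hsub _ ih => exact (ih hM hT).of_subC hsub
  | _ => cases hM

theorem Typing.not_mem_ldom_of_unr (h : Typing P Γ V T e) (hV : IsValue V) (hT : T.Unr) :
    ∀ l, l ∉ ldom Γ := by
  induction h with
  | unit | new | op | split | drop =>
      rintro l ⟨m, hm⟩
      cases hm
  | abs _ _ _ _ _ _ _ hunr =>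
      rintro l ⟨m, hm⟩
      exact absurd (hunr _ hm) Bool.false_ne_true
  | loc | uabs | rabs | labs => cases hT
  | upair _ _ _ _ _ _ _ _ _ _ ih₁ ih₂ | opair _ _ _ _ _ _ _ _ _ _ _ ih₁ ih₂ =>
      rcases hV with _ | _ | _ | _ | _ | _ | ⟨_, _, hV₁, hV₂⟩ | ⟨_, _, hV₁, hV₂⟩
      obtain ⟨hS, hT⟩ := Bool.and_eq_true_iff.1 hT
      rintro l ⟨m, hm⟩
      rcases List.mem_append.1 hm with hm | hm
      exacts [ih₁ hV₁ hS l ⟨m, hm⟩, ih₂ hV₂ hT l ⟨m, hm⟩]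
  | weaken _ _ _ _ _ _ _ hsub _ ih => exact fun l hl => ih hV hT l (hsub.ldom_subset hl)
  | _ => cases hV

end Typing

section Progress

variable {α : Type} {P : OPM α} {Γ Γ₁ Γ₂ : Ctx α} {M N V W : Expr α} {S T : Ty α}
  {e e₁ e₂ : Bool} {H : Heap α}

def ECtx.comp : ECtx α → ECtx α → ECtx α
  | .hole, E => E
  | .appL E₁ N, E => .appL (E₁.comp E) N
  | .appR V hV E₁, E => .appR V hV (E₁.comp E)
  | .uappL E₁ N, E => .uappL (E₁.comp E) N
  | .uappR V hV E₁, E => .uappR V hV (E₁.comp E)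
  | .rappL E₁ N, E => .rappL (E₁.comp E) N
  | .rappR V hV E₁, E => .rappR V hV (E₁.comp E)
  | .lappL E₁ V hV, E => .lappL (E₁.comp E) V hV
  | .lappR N E₁, E => .lappR N (E₁.comp E)
  | .upairL E₁ N, E => .upairL (E₁.comp E) N
  | .upairR V hV E₁, E => .upairR V hV (E₁.comp E)
  | .opairL E₁ N, E => .opairL (E₁.comp E) N
  | .opairR V hV E₁, E => .opairR V hV (E₁.comp E)
  | .uletE x y E₁ N, E => .uletE x y (E₁.comp E) N
  | .oletE x y E₁ N, E => .oletE x y (E₁.comp E) N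

theorem ECtx.comp_plug (E₁ E : ECtx α) (M : Expr α) : (E₁.comp E).plug M = E₁.plug (E.plug M) := by
  induction E₁ <;> simp [ECtx.comp, ECtx.plug, *]

theorem Step.plug {M' : Expr α} {H' : Heap α} (E : ECtx α) (h : Step P M H M' H') :
    Step P (E.plug M) H (E.plug M') H' := by
  cases h with
  | exp E₀ _ _ _ hb => simpa only [← ECtx.comp_plug] using Step.exp (E.comp E₀) _ _ _ hb
  | cfg E₀ _ _ _ _ hc => simpa only [← ECtx.comp_plug] using Step.cfg (E.comp E₀) _ _ _ _ hc

theorem BetaStep.step {M' : Expr α} (h : BetaStep M M') : Step P M H M' H :=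
  .exp .hole M M' H h

theorem CfgStep.step {M' : Expr α} {H' : Heap α} (h : CfgStep P M H M' H') : Step P M H M' H' :=
  .cfg .hole M M' H H' h

def LiveBinding (P : OPM α) (H : Heap α) : Binding α → Prop
  | .loc l a => Closable P H l a
  | .var _ _ => False

def Live (P : OPM α) (H : Heap α) (Γ : Ctx α) : Prop := ∀ b ∈ Γ.toList, LiveBinding P H b

def OpReady (P : OPM α) (H : Heap α) (Γ : Ctx α) : Prop :=
  ∀ l a, MinimalLoc l a Γ → Usable P H l a

theorem Live.mono {Γ' : Ctx α} (h : Live P H Γ) (hsub : Γ'.toList ⊆ Γ.toList) : Live P H Γ' :=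
  fun b hb => h b (hsub hb)

theorem progress_app (hV : Typing P Γ₁ V (.arrow S e T) e₁) (hW : Typing P Γ₂ W S e₂)
    (hvV : IsValue V) (hvW : IsValue W) (hlive : Live P H Γ₂) (hop : e = true → OpReady P H Γ₂) :
    ∃ M' H', Step P (.app V W) H M' H' := by
  cases hV.canonical hvV with
  | abs x M => exact ⟨_, _, (BetaStep.beta x M W hvW).step⟩
  | new m =>
      cases hW.canonical hvW
      obtain ⟨l, hl⟩ := (Set.Finite.infinite_compl H.fin).nonempty
      exact ⟨_, _, (CfgStep.new H l m hl).step⟩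
  | op h₁₂ =>
      cases hW.canonical hvW with
      | loc l =>
      obtain ⟨H', hs⟩ := (hop rfl l _ (hW.minimalLoc rfl rfl)).exists_op h₁₂
      exact ⟨_, _, hs.step⟩
  | split m₀ m₁ m₂ =>
      cases hW.canonical hvW with
      | loc l =>
      obtain ⟨H', hs⟩ := (hlive _ (hW.minimalLoc rfl rfl).mem_toList).exists_split m₁ m₂
      exact ⟨_, _, hs.step⟩
  | drop hε =>
      cases hW.canonical hvW with
      | loc l =>
      obtain ⟨H', hs⟩ := (hlive _ (hW.minimalLoc rfl rfl).mem_toList).exists_drop hε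
      exact ⟨_, _, hs.step⟩

theorem Typing.progress_of_live (h : Typing P Γ M T e) (hlive : Live P H Γ)
    (hop : e = true → OpReady P H Γ) : IsValue M ∨ ∃ M' H', Step P M H M' H' := by
  induction h with
  | unit | new | op | split | drop => exact .inl (.const _)
  | var => exact (hlive _ (List.mem_singleton_self _)).elim
  | loc l => exact .inl (.loc l)
  | abs _ x _ _ M => exact .inl (.abs x M)
  | uabs _ x _ _ M => exact .inl (.uabs x M)
  | rabs _ x _ _ M => exact .inl (.rabs x M)
  | labs _ x _ _ M => exact .inl (.labs x M)
  | app Γ₁ Γ₂ M N _ _ e e₁ e₂ hM hN ihM ihN =>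
      rcases ihM (hlive.mono (List.subset_append_left _ _))
        (fun he l a hl => hop (by simp [he]) l a (.commaL _ hl)) with hvM | ⟨M', H', hs⟩
      · -- the function value holds no location, so no binding precedes those of `Γ₂`
        have hop₂ : (e || e₁ || e₂) = true → OpReady P H Γ₂ :=
          fun he l a hl => hop he l a (.commaR (hM.not_mem_ldom_of_unr hvM rfl l) hl)
        rcases ihN (hlive.mono (List.subset_append_right _ _)) (fun he => hop₂ (by simp [he]))
          with hvN | ⟨N', H', hs⟩
        · exact .inr (progress_app hM hN hvM hvN (hlive.mono (List.subset_append_right _ _))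
            fun he => hop₂ (by simp [he]))
        · exact .inr ⟨_, _, hs.plug (.appR M hvM .hole)⟩
      · exact .inr ⟨_, _, hs.plug (.appL .hole N)⟩
  | uapp Γ₁ Γ₂ M N _ _ _ _ _ hM _ ihM ihN =>
      rcases ihM (hlive.mono (List.subset_append_left _ _))
        (fun he l a hl => hop (by simp [he]) l a (.parL _ hl)) with hvM | ⟨M', H', hs⟩
      · rcases ihN (hlive.mono (List.subset_append_right _ _))
          (fun he l a hl => hop (by simp [he]) l a (.parR _ hl)) with hvN | ⟨N', H', hs⟩
        · cases hM.canonical hvM with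
          | uabs x M => exact .inr ⟨_, _, (BetaStep.ubeta x M N hvN).step⟩
        · exact .inr ⟨_, _, hs.plug (.uappR M hvM .hole)⟩
      · exact .inr ⟨_, _, hs.plug (.uappL .hole N)⟩
  | rapp Γ₁ Γ₂ M N _ _ _ _ hM _ ihM ihN =>
      rcases ihM (hlive.mono (List.subset_append_left _ _))
        (fun he l a hl => hop (by simp [he]) l a (.commaL _ hl)) with hvM | ⟨M', H', hs⟩
      · rcases ihN (hlive.mono (List.subset_append_right _ _)) nofun with hvN | ⟨N', H', hs⟩
        · cases hM.canonical hvM with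
          | rabs x M => exact .inr ⟨_, _, (BetaStep.rbeta x M N hvN).step⟩
        · exact .inr ⟨_, _, hs.plug (.rappR M hvM .hole)⟩
      · exact .inr ⟨_, _, hs.plug (.rappL .hole N)⟩
  | lapp Γ₁ Γ₂ M N _ _ _ _ hM _ ihM ihN =>
      rcases ihN (hlive.mono (List.subset_append_left _ _))
        (fun he l a hl => hop (by simp [he]) l a (.commaL _ hl)) with hvN | ⟨N', H', hs⟩
      · rcases ihM (hlive.mono (List.subset_append_right _ _)) nofun with hvM | ⟨M', H', hs⟩
        · cases hM.canonical hvM with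
          | labs x M => exact .inr ⟨_, _, (BetaStep.lbeta x M N hvN).step⟩
        · exact .inr ⟨_, _, hs.plug (.lappL .hole N hvN)⟩
      · exact .inr ⟨_, _, hs.plug (.lappR M .hole)⟩
  | upair Γ₁ Γ₂ M N _ _ _ _ _ _ ihM ihN =>
      rcases ihM (hlive.mono (List.subset_append_left _ _))
        (fun he l a hl => hop (by simp [he]) l a (.parL _ hl)) with hvM | ⟨M', H', hs⟩
      · rcases ihN (hlive.mono (List.subset_append_right _ _))
          (fun he l a hl => hop (by simp [he]) l a (.parR _ hl)) with hvN | ⟨N', H', hs⟩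
        · exact .inl (.upair M N hvM hvN)
        · exact .inr ⟨_, _, hs.plug (.upairR M hvM .hole)⟩
      · exact .inr ⟨_, _, hs.plug (.upairL .hole N)⟩
  | opair Γ₁ Γ₂ M N S _ _ e₂ hord hM _ ihM ihN =>
      rcases ihM (hlive.mono (List.subset_append_left _ _))
        (fun he l a hl => hop (by simp [he]) l a (.commaL _ hl)) with hvM | ⟨M', H', hs⟩
      · -- an effectful second component forces an unrestricted, hence location-free, first one
        have hop₂ : e₂ = true → OpReady P H Γ₂ := by
          intro he l a hl
          cases hS : S.unrB
          · exact absurd (hord hS) (by simp [he])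
          · exact hop (by simp [he]) l a (.commaR (hM.not_mem_ldom_of_unr hvM hS l) hl)
        rcases ihN (hlive.mono (List.subset_append_right _ _)) hop₂ with hvN | ⟨N', H', hs⟩
        · exact .inl (.opair M N hvM hvN)
        · exact .inr ⟨_, _, hs.plug (.opairR M hvM .hole)⟩
      · exact .inr ⟨_, _, hs.plug (.opairL .hole N)⟩
  | ulet G Γ x y M N _ _ _ _ hxy _ _ hM _ ihM _ =>
      rcases ihM (hlive.mono (GPat.toList_subset_fill G Γ)) nofun with hvM | ⟨M', H', hs⟩
      · cases hM.canonical hvM with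
        | upair V₁ V₂ =>
        rcases hvM with _ | _ | _ | _ | _ | _ | ⟨_, _, hV₁, hV₂⟩
        exact .inr ⟨_, _, (BetaStep.uletv x y N V₁ V₂ hxy hV₁ hV₂).step⟩
      · exact .inr ⟨_, _, hs.plug (.uletE x y .hole N)⟩
  | olet G Γ x y M N _ _ _ _ hxy _ _ hM _ ihM _ =>
      rcases ihM (hlive.mono (GPat.toList_subset_fill G Γ)) nofun with hvM | ⟨M', H', hs⟩
      · cases hM.canonical hvM with
        | opair V₁ V₂ =>
        rcases hvM with _ | _ | _ | _ | _ | _ | _ | ⟨_, _, hV₁, hV₂⟩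
        exact .inr ⟨_, _, (BetaStep.oletv x y N V₁ V₂ hxy hV₁ hV₂).step⟩
      · exact .inr ⟨_, _, hs.plug (.oletE x y .hole N)⟩
  | weaken _ _ _ _ _ e₂ _ hsub hle ih =>
      exact ih (hlive.mono hsub.toList_subset) fun he l a hl =>
        hop (le_antisymm (Bool.le_true e₂) (he ▸ hle)) l a (hl.of_subC hsub)

end Progress

/-- **Progress.** If `C ⊢ M : T | e` and `(C , C') ⊢ ℋ` for a run-time
context `C'`, then `M` is a value or `M | ℋ` can take a step. -/
theorem progress {α : Type} (P : OPM α) (C C' : Ctx α) (M : Expr α)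
    (H : Heap α) (T : Ty α) (e : Bool)
    (hC : isRuntime C) (hC' : isRuntime C')
    (hty : Typing P C M T e)
    (hheap : HeapTy P (GCtx.comma C C') H) :
    IsValue M ∨ ∃ (M' : Expr α) (H' : Heap α), Step P M H M' H' := by
  have hrt : isRuntime (.comma C C') := fun b hb => (List.mem_append.1 hb).elim (hC b) (hC' b)
  refine hty.progress_of_live (fun b hb => ?_) fun _ l a hl => hheap.usable hrt (.commaL C' hl)
  obtain ⟨l, a, rfl⟩ := hC b hb
  exact hheap.closable (List.mem_append_left _ hb)

end LawOrder
end

section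
/- Value substitution: if 𝒢[x:S] ⊢ M : T | e₁, the variable x does not occur in the domain of the context pattern 𝒢 (i.e., x ∉ dom(𝒢[·])), and C ⊢ V : S | e₂ for a run-time context C and value V, then 𝒢[C] ⊢ M[V/x] : T | e₁ ⊔ e₂. -/
set_option autoImplicit false
set_option linter.unusedVariables false

namespace LawOrder

/-!
Instead of substituting `C` for the hole of `𝒢` only, substitute it for every binding of `x`:
writing `Γ[C/x]` for this context substitution, `Γ ⊢ M : T | e` implies
`Γ[C/x] ⊢ M[V/x] : T | e` whenever every binding of `x` in `Γ` has type `S` and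
`C ⊢ V : S | 0` (`Typing.substitution`, by induction on the derivation). Since `x ∉ dom(𝒢[·])`,
`(𝒢[x:S])[C/x] = 𝒢[C]`. Values can be given effect `0`, and a value of unrestricted type is typed
in an unrestricted context, so an unrestricted `x` is replaced by a context without vertices.

The only case that is not syntactic is weakening. Up to isomorphism, the graph of `Γ[C/x]` is the
graph of `Γ` with the graph of `C` substituted lexicographically for the vertices labelled by `x`,
and this substitution preserves being a spanning subgraph up to isomorphism.
-/

/-- Labelled graphs on an arbitrary vertex type. Contexts are interpreted into them with sums of
vertex types (`GCtx.graph`), which replaces the index arithmetic of `Graph` by equivalences of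
types. -/
structure LGraph (B : Type) where
  V : Type
  label : V → B
  edge : V → V → Prop

namespace LGraph

variable {B : Type}

abbrev empty (B : Type) : LGraph B := ⟨Empty, Empty.elim, fun _ _ => False⟩

abbrev single (b : B) : LGraph B := ⟨Unit, fun _ => b, fun _ _ => False⟩

/-- Disjoint union with every edge from `A` to `C` when `c` holds: `sum True` is the join and
`sum False` the plain union. -/
def sum (c : Prop) (A C : LGraph B) : LGraph B where
  V := A.V ⊕ C.V
  label := Sum.elim A.label C.label
  edge
    | .inl a, .inl a' => A.edge a a'
    | .inr b, .inr b' => C.edge b b'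
    | .inl _, .inr _ => c
    | .inr _, .inl _ => False

def Iso (A A' : LGraph B) : Prop :=
  ∃ e : A.V ≃ A'.V, (∀ v, A'.label (e v) = A.label v) ∧ ∀ u v, A'.edge (e u) (e v) ↔ A.edge u v

/-- `A` is isomorphic to a spanning subgraph of `A'`. -/
def SpanningLE (A A' : LGraph B) : Prop :=
  ∃ e : A.V ≃ A'.V, (∀ v, A'.label (e v) = A.label v) ∧
    ∀ u v, A.edge u v → A'.edge (e u) (e v)

theorem Iso.refl (A : LGraph B) : A.Iso A :=
  ⟨Equiv.refl _, fun _ => rfl, fun _ _ => Iff.rfl⟩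

theorem Iso.symm {A A' : LGraph B} : A.Iso A' → A'.Iso A := by
  rintro ⟨e, hl, he⟩
  refine ⟨e.symm, fun v => ?_, fun u v => ?_⟩
  · simpa using (hl (e.symm v)).symm
  · simpa using (he (e.symm u) (e.symm v)).symm

theorem Iso.trans {A A' A'' : LGraph B} : A.Iso A' → A'.Iso A'' → A.Iso A'' := by
  rintro ⟨e, hl, he⟩ ⟨e', hl', he'⟩
  exact ⟨e.trans e', fun v => (hl' _).trans (hl v), fun u v => (he' _ _).trans (he u v)⟩

theorem Iso.of_isEmpty {A A' : LGraph B} [IsEmpty A.V] [IsEmpty A'.V] : A.Iso A' :=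
  ⟨Equiv.equivOfIsEmpty _ _, isEmptyElim, isEmptyElim⟩

theorem Iso.sum {A A' C C' : LGraph B} (c : Prop) :
    A.Iso A' → C.Iso C' → (LGraph.sum c A C).Iso (LGraph.sum c A' C') := by
  rintro ⟨e, hl, he⟩ ⟨e', hl', he'⟩
  refine ⟨e.sumCongr e', ?_, ?_⟩
  · rintro (v | v)
    exacts [hl v, hl' v]
  · rintro (u | u) (v | v)
    exacts [he u v, Iff.rfl, Iff.rfl, he' u v]

theorem Iso.spanningLE {A A' : LGraph B} : A.Iso A' → A.SpanningLE A' := by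
  rintro ⟨e, hl, he⟩
  exact ⟨e, hl, fun u v => (he u v).2⟩

theorem SpanningLE.trans {A A' A'' : LGraph B} :
    A.SpanningLE A' → A'.SpanningLE A'' → A.SpanningLE A'' := by
  rintro ⟨e, hl, he⟩ ⟨e', hl', he'⟩
  exact ⟨e.trans e', fun v => (hl' _).trans (hl v), fun u v h => he' _ _ (he u v h)⟩

theorem Iso.spanningLE_congr {A A' C C' : LGraph B} (hA : A.Iso A') (hC : C.Iso C') :
    A.SpanningLE C ↔ A'.SpanningLE C' :=
  ⟨fun h => hA.symm.spanningLE.trans (h.trans hC.spanningLE),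
    fun h => hA.spanningLE.trans (h.trans hC.symm.spanningLE)⟩

/-- Lexicographic substitution of `K` for every vertex whose label satisfies `q`: the vertex
`(v, none)` is an untouched vertex `v`, and `(v, some k)` is the copy of `k` replacing `v`. -/
def lexSubst (A : LGraph B) (q : B → Prop) (K : LGraph B) : LGraph B where
  V := {p : A.V × Option K.V // p.2.isSome ↔ q (A.label p.1)}
  label p := p.1.2.elim (A.label p.1.1) K.label
  edge p p' := A.edge p.1.1 p'.1.1 ∨
    p.1.1 = p'.1.1 ∧ ∃ k k', p.1.2 = some k ∧ p'.1.2 = some k' ∧ K.edge k k'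

theorem SpanningLE.lexSubst {A A' : LGraph B} (q : B → Prop) (K : LGraph B) :
    A.SpanningLE A' → (A.lexSubst q K).SpanningLE (A'.lexSubst q K) := by
  rintro ⟨e, hl, he⟩
  refine ⟨(e.prodCongr (Equiv.refl _)).subtypeEquiv fun p => by simp [hl], ?_, ?_⟩
  · rintro ⟨⟨v, _ | k⟩, _⟩
    exacts [hl v, rfl]
  · rintro ⟨⟨u, o⟩, _⟩ ⟨⟨v, o'⟩, _⟩ (h | ⟨rfl, h⟩)
    · exact Or.inl (he u v h)
    · exact Or.inr ⟨rfl, h⟩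

theorem iso_lexSubst_of_forall_not {A : LGraph B} {q : B → Prop} (K : LGraph B)
    (h : ∀ v, ¬ q (A.label v)) : A.Iso (A.lexSubst q K) := by
  refine ⟨⟨fun v => ⟨(v, none), by simpa using h v⟩, fun p => p.1.1, fun _ => rfl, ?_⟩,
    fun _ => rfl, fun u v => ?_⟩
  · rintro ⟨⟨v, _ | k⟩, hp⟩
    · rfl
    · exact absurd (hp.1 rfl) (h v)
  · refine ⟨fun h => h.resolve_right ?_, Or.inl⟩
    rintro ⟨-, k, -, hk, -⟩
    cases hk

theorem iso_single_lexSubst {b : B} {q : B → Prop} (K : LGraph B) (h : q b) :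
    K.Iso ((single b).lexSubst q K) := by
  refine ⟨⟨fun k => ⟨((), some k), iff_of_true rfl h⟩, fun p => p.1.2.get (p.2.2 h), fun _ => rfl, ?_⟩,
    fun _ => rfl, ?_⟩
  · rintro ⟨⟨⟨⟩, _ | k⟩, hp⟩
    · exact absurd (hp.2 h) (by simp)
    · rfl
  · refine fun u v => ⟨?_, fun h => Or.inr ⟨rfl, u, v, rfl, rfl, h⟩⟩
    rintro (h | ⟨-, k, k', hk, hk', h⟩)
    · exact h.elim
    · rwa [Option.some.inj hk, Option.some.inj hk']

theorem lexSubst_sum_iso (c : Prop) (A C : LGraph B) (q : B → Prop) (K : LGraph B) :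
    ((LGraph.sum c A C).lexSubst q K).Iso (LGraph.sum c (A.lexSubst q K) (C.lexSubst q K)) := by
  refine ⟨⟨fun
      | ⟨(.inl a, o), h⟩ => .inl ⟨(a, o), h⟩
      | ⟨(.inr b, o), h⟩ => .inr ⟨(b, o), h⟩,
    fun
      | .inl ⟨(a, o), h⟩ => ⟨(.inl a, o), h⟩
      | .inr ⟨(b, o), h⟩ => ⟨(.inr b, o), h⟩, ?_, ?_⟩, ?_, ?_⟩
  · rintro ⟨⟨a | b, o⟩, h⟩ <;> rfl
  · rintro (⟨⟨a, o⟩, h⟩ | ⟨⟨b, o⟩, h⟩) <;> rfl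
  · rintro ⟨⟨a | b, _ | k⟩, h⟩ <;> rfl
  · rintro ⟨⟨a | b, o⟩, h⟩ ⟨⟨a' | b', o'⟩, h'⟩
    · exact or_congr_right (and_congr_left' Sum.inl_injective.eq_iff.symm)
    · exact (or_iff_left fun h => Sum.inl_ne_inr h.1).symm
    · exact (or_iff_left fun h => Sum.inr_ne_inl h.1).symm
    · exact or_congr_right (and_congr_left' Sum.inr_injective.eq_iff.symm)

end LGraph

namespace Graph

variable {B : Type}

abbrev toLGraph (G : Graph B) : LGraph B := ⟨Fin G.n, fun i => G.label i, fun i j => G.edge i j⟩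

theorem iso_iff {G₁ G₂ : Graph B} : G₁.Iso G₂ ↔ G₂.toLGraph.Iso G₁.toLGraph := by
  constructor
  · rintro ⟨hn, f, hf, he, hl⟩
    exact ⟨(finCongr hn.symm).trans (Equiv.ofBijective f hf), fun v => hl (finCongr hn.symm v),
      fun u v => he (finCongr hn.symm u) (finCongr hn.symm v)⟩
  · rintro ⟨e, hl, he⟩
    have hn : G₁.n = G₂.n := (Fin.equiv_iff_eq.mp ⟨e⟩).symm
    exact ⟨hn, e ∘ finCongr hn, e.bijective.comp (finCongr hn).bijective,
      fun u v => he (finCongr hn u) (finCongr hn v), fun v => hl (finCongr hn v)⟩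

theorem Spanning.spanningLE {G₁ G₂ : Graph B} :
    G₁.Spanning G₂ → G₁.toLGraph.SpanningLE G₂.toLGraph := by
  rintro ⟨hn, hl, he⟩
  exact ⟨finCongr hn, fun v => (hl v v.2).symm, fun u v => he u v⟩

abbrev pullback (G H : Graph B) (e : Fin G.n ≃ Fin H.n) : Graph B where
  n := G.n
  label := G.label
  edge i j := ∃ (hi : i < G.n) (hj : j < G.n), H.edge (e ⟨i, hi⟩) (e ⟨j, hj⟩)
  edge_lt _ _ := fun ⟨hi, hj, _⟩ => ⟨hi, hj⟩

theorem exists_iso_spanning_iso_iff {G H : Graph B} :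
    (∃ G₁ G₂, G.Iso G₁ ∧ G₁.Spanning G₂ ∧ G₂.Iso H) ↔ G.toLGraph.SpanningLE H.toLGraph := by
  constructor
  · rintro ⟨G₁, G₂, h₁, h₂, h₃⟩
    exact (iso_iff.mp h₁).symm.spanningLE.trans
      (h₂.spanningLE.trans (iso_iff.mp h₃).symm.spanningLE)
  · rintro ⟨e, hl, he⟩
    refine ⟨G, pullback G H e, iso_iff.mpr (.refl _), ⟨rfl, fun _ _ => rfl, fun i j h => ?_⟩,
      iso_iff.mpr ⟨e.symm, fun v => ?_, fun u v => ?_⟩⟩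
    · obtain ⟨hi, hj⟩ := G.edge_lt i j h
      exact ⟨hi, hj, he ⟨i, hi⟩ ⟨j, hj⟩ h⟩
    · simpa using (hl (e.symm v)).symm
    · simp

theorem sum_iso_join (G₁ G₂ : Graph B) :
    (LGraph.sum True G₁.toLGraph G₂.toLGraph).Iso (G₁.join G₂).toLGraph := by
  refine ⟨finSumFinEquiv, ?_, ?_⟩
  · rintro (i | i)
    · show (G₁.join G₂).label i = G₁.label i
      simp [join]
    · show (G₁.join G₂).label (G₁.n + i) = G₂.label i
      simp [join]
  · rintro (i | i) (j | j)
    · show (G₁.join G₂).edge i j ↔ G₁.edge i j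
      simp [join]
    · show (G₁.join G₂).edge i (G₁.n + j) ↔ True
      simp [join]
    · show (G₁.join G₂).edge (G₁.n + i) j ↔ False
      simpa [join] using fun h => absurd (G₁.edge_lt _ _ h).1 (by omega)
    · show (G₁.join G₂).edge (G₁.n + i) (G₁.n + j) ↔ G₂.edge i j
      simpa [join] using fun h => absurd (G₁.edge_lt _ _ h).1 (by omega)

theorem sum_iso_union (G₁ G₂ : Graph B) :
    (LGraph.sum False G₁.toLGraph G₂.toLGraph).Iso (G₁.union G₂).toLGraph := by
  refine ⟨finSumFinEquiv, ?_, ?_⟩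
  · rintro (i | i)
    · show (G₁.union G₂).label i = G₁.label i
      simp [union]
    · show (G₁.union G₂).label (G₁.n + i) = G₂.label i
      simp [union]
  · rintro (i | i) (j | j)
    · show (G₁.union G₂).edge i j ↔ G₁.edge i j
      simp [union]
    · show (G₁.union G₂).edge i (G₁.n + j) ↔ False
      simpa [union] using fun h => absurd (G₁.edge_lt _ _ h).2 (by omega)
    · show (G₁.union G₂).edge (G₁.n + i) j ↔ False
      simpa [union] using fun h => absurd (G₁.edge_lt _ _ h).1 (by omega)
    · show (G₁.union G₂).edge (G₁.n + i) (G₁.n + j) ↔ G₂.edge i j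
      simpa [union] using fun h => absurd (G₁.edge_lt _ _ h).1 (by omega)

end Graph

def GCtx.graph {B : Type} (unr : B → Bool) : GCtx B → LGraph B
  | .empty => .empty B
  | .bind b => bif unr b then .empty B else .single b
  | .comma Γ₁ Γ₂ => .sum True (graph unr Γ₁) (graph unr Γ₂)
  | .par Γ₁ Γ₂ => .sum False (graph unr Γ₁) (graph unr Γ₂)


theorem GCtx.graph_iso_interpG {B : Type} [Inhabited B] (unr : B → Bool) (Γ : GCtx B) :
    (Γ.graph unr).Iso (Γ.interpG unr).toLGraph := by
  induction Γ with
  | empty =>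
    simp only [graph, interpG, Graph.zero]
    exact .of_isEmpty
  | bind b =>
    cases h : unr b
    · simp only [graph, interpG, h, cond_false, Bool.false_eq_true, if_false]
      exact ⟨(Equiv.equivPUnit _).symm, fun _ => rfl, fun _ _ => Iff.rfl⟩
    · simp only [graph, interpG, h, cond_true, if_true, Graph.zero]
      exact .of_isEmpty
  | comma Γ₁ Γ₂ ih₁ ih₂ => exact (LGraph.Iso.sum True ih₁ ih₂).trans (Graph.sum_iso_join _ _)
  | par Γ₁ Γ₂ ih₁ ih₂ => exact (LGraph.Iso.sum False ih₁ ih₂).trans (Graph.sum_iso_union _ _)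

namespace GCtx

variable {B : Type} (unr : B → Bool)

theorem graph_bind_of_false {b : B} (h : unr b = false) : (bind b).graph unr = .single b := by
  simp [graph, h]

theorem graph_bind_of_true {b : B} (h : unr b = true) : (bind b).graph unr = .empty B := by
  simp [graph, h]

theorem exists_label_iff (Γ : GCtx B) (b : B) :
    (∃ v, (Γ.graph unr).label v = b) ↔ b ∈ Γ.toList ∧ unr b = false := by
  induction Γ with
  | empty => simp [graph, toList]
  | bind b' =>
    cases h : unr b'
    · rw [graph_bind_of_false unr h]
      simp only [toList, List.mem_singleton]
      exact ⟨fun ⟨_, hb⟩ => ⟨hb.symm, hb ▸ h⟩, fun ⟨hb, _⟩ => ⟨(), hb.symm⟩⟩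
    · rw [graph_bind_of_true unr h]
      simp only [toList, List.mem_singleton]
      exact ⟨fun ⟨v, _⟩ => v.elim, fun ⟨hb, hu⟩ => by simp [hb, h] at hu⟩
  | comma Γ₁ Γ₂ ih₁ ih₂ | par Γ₁ Γ₂ ih₁ ih₂ =>
    simp [graph, LGraph.sum, Sum.exists, toList, ih₁, ih₂, or_and_right]

theorem isEmpty_graph_iff (Γ : GCtx B) :
    IsEmpty (Γ.graph unr).V ↔ ∀ b ∈ Γ.toList, unr b = true := by
  rw [← not_nonempty_iff]
  constructor
  · intro hV b hb
    by_contra hu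
    obtain ⟨v, -⟩ := (exists_label_iff unr Γ b).mpr ⟨hb, by simpa using hu⟩
    exact hV ⟨v⟩
  · rintro hΓ ⟨v⟩
    have := (exists_label_iff unr Γ _).mp ⟨v, rfl⟩
    simp [hΓ _ this.1] at this

theorem mem_unrSet (Γ : GCtx B) (b : B) : b ∈ Γ.unrSet unr ↔ b ∈ Γ.toList ∧ unr b = true := by
  induction Γ with
  | empty => simp [unrSet, toList]
  | bind b' =>
    cases h : unr b' <;> simp only [unrSet, toList, h, Bool.false_eq_true,
      if_false, if_true, Set.mem_singleton_iff, List.mem_singleton]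
    · exact ⟨False.elim, fun ⟨hb, hu⟩ => by simp [hb, h] at hu⟩
    · exact ⟨fun hb => ⟨hb, hb ▸ h⟩, And.left⟩
  | comma Γ₁ Γ₂ ih₁ ih₂ | par Γ₁ Γ₂ ih₁ ih₂ => simp [unrSet, toList, ih₁, ih₂, or_and_right]

end GCtx

theorem GPat.mem_toList_fill {B : Type} (G : GPat B) (Δ : GCtx B) (b : B) :
    b ∈ (G.fill Δ).toList ↔ b ∈ (G.fill .empty).toList ∨ b ∈ Δ.toList := by
  induction G with
  | hole => simp [GPat.fill, GCtx.toList]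
  | commaL G Δ' ih | parL G Δ' ih =>
    simp only [GPat.fill, GCtx.toList, List.mem_append, ih]
    rw [or_right_comm]
  | commaR Δ' G ih | parR Δ' G ih =>
    simp only [GPat.fill, GCtx.toList, List.mem_append, ih, or_assoc]

section

variable {α : Type}

abbrev ctxGraph (Γ : Ctx α) : LGraph (Binding α) := Γ.graph Binding.unrB

theorem subC_iff {Γ₁ Γ₂ : Ctx α} :
    SubC Γ₁ Γ₂ ↔ (ctxGraph Γ₁).SpanningLE (ctxGraph Γ₂) ∧ unrSetC Γ₂ ⊆ unrSetC Γ₁ := by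
  rw [SubC, Graph.exists_iso_spanning_iso_iff]
  exact and_congr_left' ((GCtx.graph_iso_interpG _ Γ₁).spanningLE_congr
    (GCtx.graph_iso_interpG _ Γ₂)).symm

theorem subC_refl (Γ : Ctx α) : SubC Γ Γ :=
  subC_iff.mpr ⟨(LGraph.Iso.refl _).spanningLE, subset_rfl⟩

theorem SubC.mem_toList {Γ₂ Γ₁ : Ctx α} (h : SubC Γ₂ Γ₁) {b : Binding α}
    (hb : b ∈ Γ₁.toList) : b ∈ Γ₂.toList := by
  obtain ⟨⟨e, hl, -⟩, hunr⟩ := subC_iff.mp h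
  cases hu : b.unrB
  · obtain ⟨v, rfl⟩ := (GCtx.exists_label_iff _ Γ₁ b).mpr ⟨hb, hu⟩
    rw [← e.apply_symm_apply v, hl] at hu ⊢
    exact ((GCtx.exists_label_iff _ Γ₂ _).mp ⟨_, rfl⟩).1
  · exact ((GCtx.mem_unrSet _ Γ₂ b).mp (hunr ((GCtx.mem_unrSet _ Γ₁ b).mpr ⟨hb, hu⟩))).1

theorem isUnrCtx_of_subC {Γ₂ Γ₁ : Ctx α} (h : SubC Γ₂ Γ₁) (h₁ : isUnrCtx Γ₁) : isUnrCtx Γ₂ := by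
  obtain ⟨⟨e, -, -⟩, -⟩ := subC_iff.mp h
  exact (GCtx.isEmpty_graph_iff _ Γ₂).mp
    (e.isEmpty_congr.mpr ((GCtx.isEmpty_graph_iff _ Γ₁).mpr h₁))

theorem mem_vdom {Γ : Ctx α} {x : ℕ} : x ∈ vdom Γ ↔ ∃ T, Binding.var x T ∈ Γ.toList := Iff.rfl

theorem vdom_eq_empty_of_isRuntime {C : Ctx α} (hC : isRuntime C) : vdom C = ∅ :=
  Set.eq_empty_of_forall_notMem fun _ ⟨_, hT⟩ => by
    obtain ⟨_, _, h⟩ := hC _ hT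
    cases h

theorem vdom_fill (G : CtxPat α) (Δ : Ctx α) :
    vdom (G.fill Δ) = vdom (G.fill .empty) ∪ vdom Δ := by
  ext x
  simp only [Set.mem_union, mem_vdom, ← exists_or]
  exact exists_congr fun T => G.mem_toList_fill Δ _

def Binding.IsVar (x : ℕ) : Binding α → Prop
  | .var y _ => y = x
  | .loc _ _ => False

/-- `Γ[C/x]`: every binding of the variable `x` in `Γ` is replaced by the context `C`. -/
def ctxSubst : Ctx α → ℕ → Ctx α → Ctx α
  | .empty, _, _ => .empty
  | .bind (.var y T), x, C => if y = x then C else .bind (.var y T)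
  | .bind (.loc l m), _, _ => .bind (.loc l m)
  | .comma Γ₁ Γ₂, x, C => .comma (ctxSubst Γ₁ x C) (ctxSubst Γ₂ x C)
  | .par Γ₁ Γ₂, x, C => .par (ctxSubst Γ₁ x C) (ctxSubst Γ₂ x C)

def patSubst : CtxPat α → ℕ → Ctx α → CtxPat α
  | .hole, _, _ => .hole
  | .commaL G Δ, x, C => .commaL (patSubst G x C) (ctxSubst Δ x C)
  | .commaR Δ G, x, C => .commaR (ctxSubst Δ x C) (patSubst G x C)
  | .parL G Δ, x, C => .parL (patSubst G x C) (ctxSubst Δ x C)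
  | .parR Δ G, x, C => .parR (ctxSubst Δ x C) (patSubst G x C)

theorem mem_toList_ctxSubst {Γ C : Ctx α} {x : ℕ} {b : Binding α} :
    b ∈ (ctxSubst Γ x C).toList ↔ b ∈ Γ.toList ∧ ¬ b.IsVar x ∨ x ∈ vdom Γ ∧ b ∈ C.toList := by
  induction Γ with
  | empty => simp [ctxSubst, GCtx.toList, mem_vdom]
  | bind b' =>
    rcases b' with ⟨y, T⟩ | ⟨l, m⟩
    · by_cases hy : y = x
      · subst hy
        simp only [ctxSubst, if_true, GCtx.toList, List.mem_singleton, mem_vdom,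
          Binding.var.injEq, true_and]
        refine ⟨fun hb => Or.inr ⟨⟨T, rfl⟩, hb⟩, ?_⟩
        rintro (⟨rfl, h⟩ | ⟨-, hb⟩)
        exacts [absurd rfl h, hb]
      · simp only [ctxSubst, hy, if_false, GCtx.toList, List.mem_singleton, mem_vdom,
          Binding.var.injEq]
        constructor
        · rintro rfl
          exact Or.inl ⟨rfl, hy⟩
        · rintro (⟨rfl, -⟩ | ⟨⟨_, rfl, -⟩, -⟩)
          · rfl
          · exact absurd rfl hy
    · simp only [ctxSubst, GCtx.toList, List.mem_singleton, mem_vdom, reduceCtorEq, exists_false,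
        false_and, or_false, iff_self_and]
      rintro rfl h
      exact h
  | comma Γ₁ Γ₂ ih₁ ih₂ | par Γ₁ Γ₂ ih₁ ih₂ =>
    simp only [ctxSubst, GCtx.toList, List.mem_append, ih₁, ih₂, mem_vdom, exists_or]
    rw [or_and_right, or_and_right, or_or_or_comm]

theorem ctxSubst_of_not_mem {Γ : Ctx α} {x : ℕ} (C : Ctx α) (hx : x ∉ vdom Γ) :
    ctxSubst Γ x C = Γ := by
  induction Γ with
  | empty => rfl
  | bind b =>
    rcases b with ⟨y, T⟩ | ⟨l, m⟩
    · have hy : y ≠ x := by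
        rintro rfl
        exact hx ⟨T, List.mem_singleton_self _⟩
      simp [ctxSubst, hy]
    · rfl
  | comma Γ₁ Γ₂ ih₁ ih₂ | par Γ₁ Γ₂ ih₁ ih₂ =>
    simp only [mem_vdom, GCtx.toList, List.mem_append, exists_or, not_or] at hx
    rw [ctxSubst, ih₁ hx.1, ih₂ hx.2]

theorem ctxSubst_fill (G : CtxPat α) (Δ : Ctx α) (x : ℕ) (C : Ctx α) :
    ctxSubst (G.fill Δ) x C = (patSubst G x C).fill (ctxSubst Δ x C) := by
  induction G with
  | hole => rfl
  | commaL G Δ' ih | commaR Δ' G ih | parL G Δ' ih | parR Δ' G ih =>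
    simp only [GPat.fill, patSubst, ctxSubst, ih]

theorem patSubst_of_not_mem {G : CtxPat α} {x : ℕ} (C : Ctx α)
    (hx : x ∉ vdom (G.fill .empty)) : patSubst G x C = G := by
  induction G with
  | hole => rfl
  | commaL G Δ ih | parL G Δ ih =>
    simp only [GPat.fill, mem_vdom, GCtx.toList, List.mem_append, exists_or, not_or] at hx
    simp only [patSubst, ih hx.1, ctxSubst_of_not_mem C hx.2]
  | commaR Δ G ih | parR Δ G ih =>
    simp only [GPat.fill, mem_vdom, GCtx.toList, List.mem_append, exists_or, not_or] at hx
    simp only [patSubst, ih hx.2, ctxSubst_of_not_mem C hx.1]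

theorem vdom_ctxSubst_subset (Γ : Ctx α) (x : ℕ) {C : Ctx α} (hC : vdom C = ∅) :
    vdom (ctxSubst Γ x C) ⊆ vdom Γ := by
  rintro y ⟨T, hT⟩
  rcases mem_toList_ctxSubst.mp hT with ⟨hT, -⟩ | ⟨-, hT⟩
  · exact ⟨T, hT⟩
  · exact absurd (show y ∈ vdom C from ⟨T, hT⟩) (by simp [hC])

theorem isUnrCtx_ctxSubst {Γ C : Ctx α} {x : ℕ} (hΓ : isUnrCtx Γ) (hC : x ∈ vdom Γ → isUnrCtx C) :
    isUnrCtx (ctxSubst Γ x C) := by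
  intro b hb
  rcases mem_toList_ctxSubst.mp hb with ⟨hb, -⟩ | ⟨hx, hb⟩
  exacts [hΓ b hb, hC hx b hb]

theorem not_isVar_label_bind {x : ℕ} {b : Binding α} (hb : ¬ b.IsVar x)
    (v : (ctxGraph (.bind b)).V) : ¬ ((ctxGraph (.bind b)).label v).IsVar x := by
  have := ((GCtx.exists_label_iff _ _ _).mp ⟨v, rfl⟩).1
  rw [List.mem_singleton.mp this]
  exact hb

theorem ctxGraph_ctxSubst_iso {x : ℕ} {C : Ctx α} (Γ : Ctx α)
    (hC : ∀ T, Binding.var x T ∈ Γ.toList → T.unrB = true → isUnrCtx C) :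
    (ctxGraph (ctxSubst Γ x C)).Iso ((ctxGraph Γ).lexSubst (Binding.IsVar x) (ctxGraph C)) := by
  induction Γ with
  | empty => exact LGraph.iso_lexSubst_of_forall_not _ fun v => Empty.elim v
  | bind b =>
    by_cases hb : b.IsVar x
    · obtain ⟨y, T⟩ | ⟨l, m⟩ := b
      · obtain rfl : y = x := hb
        have hsubst : ctxSubst (.bind (.var y T)) y C = C := if_pos rfl
        rw [hsubst]
        cases hT : T.unrB
        · unfold ctxGraph
          rw [GCtx.graph_bind_of_false Binding.unrB (b := .var y T) hT]
          exact LGraph.iso_single_lexSubst _ rfl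
        · unfold ctxGraph
          rw [GCtx.graph_bind_of_true Binding.unrB (b := .var y T) hT]
          have := (GCtx.isEmpty_graph_iff _ C).mpr (hC T (List.mem_singleton_self _) hT)
          exact LGraph.Iso.of_isEmpty.trans (LGraph.iso_lexSubst_of_forall_not _ isEmptyElim)
      · exact hb.elim
    · have hsubst : ctxSubst (.bind b) x C = .bind b := by
        obtain ⟨y, T⟩ | ⟨l, m⟩ := b
        exacts [if_neg hb, rfl]
      rw [hsubst]
      exact LGraph.iso_lexSubst_of_forall_not _ (not_isVar_label_bind hb)
  | comma Γ₁ Γ₂ ih₁ ih₂ | par Γ₁ Γ₂ ih₁ ih₂ =>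
    simp only [GCtx.toList, List.mem_append] at hC
    exact (LGraph.Iso.sum _ (ih₁ fun T hT => hC T (.inl hT)) (ih₂ fun T hT => hC T (.inr hT))).trans
      (LGraph.lexSubst_sum_iso _ _ _ _ _).symm

theorem SubC.ctxSubst {Γ₂ Γ₁ C : Ctx α} {x : ℕ} (h : SubC Γ₂ Γ₁)
    (hC : ∀ T, Binding.var x T ∈ Γ₂.toList → T.unrB = true → isUnrCtx C) :
    SubC (ctxSubst Γ₂ x C) (ctxSubst Γ₁ x C) := by
  obtain ⟨hG, hunr⟩ := subC_iff.mp h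
  refine subC_iff.mpr ⟨?_, fun b hb => ?_⟩
  · exact ((ctxGraph_ctxSubst_iso Γ₂ hC).spanningLE_congr
      (ctxGraph_ctxSubst_iso Γ₁ fun T hT => hC T (h.mem_toList hT))).mpr (hG.lexSubst _ _)
  · obtain ⟨hb, hu⟩ := (GCtx.mem_unrSet _ _ b).mp hb
    refine (GCtx.mem_unrSet _ _ b).mpr ⟨mem_toList_ctxSubst.mpr ?_, hu⟩
    rcases mem_toList_ctxSubst.mp hb with ⟨hb, hx⟩ | ⟨⟨T, hT⟩, hb⟩
    · exact .inl ⟨((GCtx.mem_unrSet _ _ b).mp (hunr ((GCtx.mem_unrSet _ _ b).mpr ⟨hb, hu⟩))).1, hx⟩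
    · exact .inr ⟨⟨T, h.mem_toList hT⟩, hb⟩

namespace Typing

variable {P : OPM α}

theorem effect_false_of_isValue {Γ : Ctx α} {M : Expr α} {T : Ty α} {e : Bool}
    (h : Typing P Γ M T e) (hM : IsValue M) : Typing P Γ M T false := by
  induction h with
  | unit => exact .unit
  | new m => exact .new m
  | op m₀ m₁ m₂ hm => exact .op m₀ m₁ m₂ hm
  | split m₀ m₁ m₂ hm => exact .split m₀ m₁ m₂ hm
  | drop m hm => exact .drop m hm
  | var x T => exact .var x T
  | loc l m => exact .loc l m
  | abs Γ x S T N e hx hΓ hN => exact .abs Γ x S T N e hx hΓ hN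
  | uabs Γ x S T N e hx hN => exact .uabs Γ x S T N e hx hN
  | rabs Γ x S T N e hx hN => exact .rabs Γ x S T N e hx hN
  | labs Γ x S T N e hx hN => exact .labs Γ x S T N e hx hN
  | upair Γ₁ Γ₂ M N S T _ _ _ _ ihM ihN =>
    obtain _ | _ | _ | _ | _ | _ | ⟨_, _, hM, hN⟩ := hM
    exact .upair Γ₁ Γ₂ M N S T false false (ihM hM) (ihN hN)
  | opair Γ₁ Γ₂ M N S T _ _ _ _ _ ihM ihN =>
    obtain _ | _ | _ | _ | _ | _ | _ | ⟨_, _, hM, hN⟩ := hM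
    exact .opair Γ₁ Γ₂ M N S T false false (fun _ => rfl) (ihM hM) (ihN hN)
  | weaken Γ₁ Γ₂ M T _ _ _ hsub _ ih => exact .weaken Γ₁ Γ₂ M T false false (ih hM) hsub le_rfl
  | _ => cases hM

theorem isUnrCtx_of_isValue {Γ : Ctx α} {M : Expr α} {T : Ty α} {e : Bool}
    (h : Typing P Γ M T e) (hM : IsValue M) (hT : T.Unr) : isUnrCtx Γ := by
  induction h with
  | unit | new | op | split | drop => exact fun b hb => absurd hb List.not_mem_nil
  | var x T => exact fun b hb => (List.mem_singleton.mp hb) ▸ hT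
  | abs _ _ _ _ _ _ _ hΓ => exact hΓ
  | loc | uabs | rabs | labs => cases hT
  | upair _ _ _ _ S T _ _ _ _ ihM ihN | opair _ _ _ _ S T _ _ _ _ _ ihM ihN =>
    obtain _ | _ | _ | _ | _ | _ | ⟨_, _, hM, hN⟩ | ⟨_, _, hM, hN⟩ := hM
    all_goals
      obtain ⟨hS, hT⟩ : S.Unr ∧ T.Unr := by simpa [Ty.Unr, Ty.unrB] using hT
      intro b hb
      rcases List.mem_append.mp hb with hb | hb
      exacts [ihM hM hS b hb, ihN hN hT b hb]
  | weaken _ _ _ _ _ _ _ hsub _ ih => exact isUnrCtx_of_subC hsub (ih hM hT)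
  | _ => cases hM

theorem substitution {Γ : Ctx α} {M : Expr α} {T : Ty α} {e : Bool} (h : Typing P Γ M T e)
    {x : ℕ} {S : Ty α} {V : Expr α} {C : Ctx α} (hΓ : ∀ T', Binding.var x T' ∈ Γ.toList → T' = S)
    (hC : vdom C = ∅) (hCunr : S.Unr → isUnrCtx C) (hV : Typing P C V S false) :
    Typing P (ctxSubst Γ x C) (subst M V x) T e := by
  induction h with
  | unit => exact .unit
  | new m => exact .new m
  | op m₀ m₁ m₂ hm => exact .op m₀ m₁ m₂ hm
  | split m₀ m₁ m₂ hm => exact .split m₀ m₁ m₂ hm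
  | drop m hm => exact .drop m hm
  | loc l m => exact .loc l m
  | var y T =>
    by_cases hy : y = x
    · subst hy
      obtain rfl := hΓ T (List.mem_singleton_self _)
      simpa [ctxSubst, subst] using hV
    · simpa [ctxSubst, subst, hy] using Typing.var y T
  | abs Γ y S' T' N e hy hunr hN ih =>
    by_cases hyx : y = x
    · -- the binder shadows `x`, which therefore does not occur in `Γ`
      subst hyx
      rw [ctxSubst_of_not_mem C hy]
      simp only [subst, ↓reduceIte]
      exact .abs Γ y S' T' N e hy hunr hN
    · simp only [subst, if_neg hyx]
      have hN' := ih fun T hT => hΓ T (by simpa [GCtx.toList, Ne.symm hyx] using hT)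
      simp only [ctxSubst, hyx, if_false] at hN'
      have hy' : y ∉ vdom (ctxSubst Γ x C) := fun h => hy (vdom_ctxSubst_subset Γ x hC h)
      exact .abs _ y S' T' _ e hy'
        (isUnrCtx_ctxSubst hunr fun ⟨T'', hT''⟩ => hCunr (hΓ T'' hT'' ▸ hunr _ hT'')) hN'
  | uabs Γ y S' T' N e hy hN ih | rabs Γ y S' T' N e hy hN ih | labs Γ y S' T' N e hy hN ih =>
    by_cases hyx : y = x
    · subst hyx
      rw [ctxSubst_of_not_mem C hy]
      simp only [subst, ↓reduceIte]
      first
        | exact .uabs Γ y S' T' N e hy hN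
        | exact .rabs Γ y S' T' N e hy hN
        | exact .labs Γ y S' T' N e hy hN
    · simp only [subst, if_neg hyx]
      have hN' := ih fun T hT => hΓ T (by simpa [GCtx.toList, Ne.symm hyx] using hT)
      simp only [ctxSubst, hyx, if_false] at hN'
      have hy' : y ∉ vdom (ctxSubst Γ x C) := fun h => hy (vdom_ctxSubst_subset Γ x hC h)
      first
        | exact .uabs _ y S' T' _ e hy' hN'
        | exact .rabs _ y S' T' _ e hy' hN'
        | exact .labs _ y S' T' _ e hy' hN'
  | app _ _ _ _ _ _ _ _ _ _ _ ihM ihN =>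
    exact .app _ _ _ _ _ _ _ _ _ (ihM fun T hT => hΓ T (List.mem_append_left _ hT))
      (ihN fun T hT => hΓ T (List.mem_append_right _ hT))
  | uapp _ _ _ _ _ _ _ _ _ _ _ ihM ihN =>
    exact .uapp _ _ _ _ _ _ _ _ _ (ihM fun T hT => hΓ T (List.mem_append_left _ hT))
      (ihN fun T hT => hΓ T (List.mem_append_right _ hT))
  | rapp _ _ _ _ _ _ _ _ _ _ ihM ihN =>
    exact .rapp _ _ _ _ _ _ _ _ (ihM fun T hT => hΓ T (List.mem_append_left _ hT))
      (ihN fun T hT => hΓ T (List.mem_append_right _ hT))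
  | lapp _ _ _ _ _ _ _ _ _ _ ihM ihN =>
    exact .lapp _ _ _ _ _ _ _ _ (ihM fun T hT => hΓ T (List.mem_append_right _ hT))
      (ihN fun T hT => hΓ T (List.mem_append_left _ hT))
  | upair _ _ _ _ _ _ _ _ _ _ ihM ihN =>
    exact .upair _ _ _ _ _ _ _ _ (ihM fun T hT => hΓ T (List.mem_append_left _ hT))
      (ihN fun T hT => hΓ T (List.mem_append_right _ hT))
  | opair _ _ _ _ _ _ _ _ hS _ _ ihM ihN =>
    exact .opair _ _ _ _ _ _ _ _ hS (ihM fun T hT => hΓ T (List.mem_append_left _ hT))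
      (ihN fun T hT => hΓ T (List.mem_append_right _ hT))
  | ulet G₀ Γ y z _ N S₁ S₂ T' e hyz hy hz _ hN ihM ihN
  | olet G₀ Γ y z _ N S₁ S₂ T' e hyz hy hz _ hN ihM ihN =>
    have hΓM : ∀ T, Binding.var x T ∈ Γ.toList → T = S :=
      fun T hT => hΓ T ((G₀.mem_toList_fill Γ _).mpr (.inr hT))
    by_cases hyzx : y = x ∨ z = x
    · have hx : x ∉ vdom (G₀.fill Γ) := by rcases hyzx with rfl | rfl <;> assumption
      have hM' := ihM hΓM
      rw [ctxSubst_of_not_mem C fun h => hx (vdom_fill G₀ Γ ▸ .inr h)] at hM'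
      rw [ctxSubst_of_not_mem C hx]
      simp only [subst, if_pos hyzx]
      first
        | exact .ulet G₀ Γ y z _ N S₁ S₂ T' e hyz hy hz hM' hN
        | exact .olet G₀ Γ y z _ N S₁ S₂ T' e hyz hy hz hM' hN
    · obtain ⟨hyx, hzx⟩ := not_or.mp hyzx
      simp only [subst, if_neg hyzx]
      have hN' := ihN fun T hT => hΓ T (by
        rw [GPat.mem_toList_fill] at hT ⊢
        refine .inl (hT.resolve_right ?_)
        simp [GCtx.toList, Ne.symm hyx, Ne.symm hzx])
      have hfresh : vdom ((patSubst G₀ x C).fill (ctxSubst Γ x C)) ⊆ vdom (G₀.fill Γ) := by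
        rw [← ctxSubst_fill]
        exact vdom_ctxSubst_subset _ _ hC
      rw [ctxSubst_fill] at hN' ⊢
      simp only [ctxSubst, hyx, hzx, if_false] at hN'
      first
        | exact .ulet _ _ y z _ _ S₁ S₂ T' e hyz (fun h => hy (hfresh h)) (fun h => hz (hfresh h))
            (ihM hΓM) hN'
        | exact .olet _ _ y z _ _ S₁ S₂ T' e hyz (fun h => hy (hfresh h)) (fun h => hz (hfresh h))
            (ihM hΓM) hN'
  | weaken _ _ _ _ _ _ _ hsub hle ih =>
    exact .weaken _ _ _ _ _ _ (ih fun T hT => hΓ T (hsub.mem_toList hT))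
      (hsub.ctxSubst fun T hT hu => hCunr (hΓ T hT ▸ hu)) hle

end Typing

end

/-- **Value substitution.** If `𝒢[x:S] ⊢ M : T | e₁`, `x ∉ dom(𝒢[·])`, and
`C ⊢ V : S | e₂` for a run-time context `C` and a value `V`, then
`𝒢[C] ⊢ M[V/x] : T | e₁ ⊔ e₂`. -/
theorem value_substitution {α : Type} (P : OPM α) (G : CtxPat α) (x : ℕ)
    (S T : Ty α) (M V : Expr α) (C : Ctx α) (e₁ e₂ : Bool)
    (hty : Typing P (GPat.fill G (GCtx.bind (Binding.var x S))) M T e₁)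
    (hx : x ∉ vdom (GPat.fill G GCtx.empty))
    (hC : isRuntime C) (hV : IsValue V)
    (htyV : Typing P C V S e₂) :
    Typing P (GPat.fill G C) (subst M V x) T (e₁ || e₂) := by
  have hG : ∀ T', Binding.var x T' ∈ (G.fill (.bind (.var x S))).toList → T' = S := by
    intro T' hT'
    rcases (G.mem_toList_fill _ _).mp hT' with h | h
    · exact absurd ⟨T', h⟩ hx
    · exact (Binding.var.inj (List.mem_singleton.mp h)).2
  have hsubst := hty.substitution hG (vdom_eq_empty_of_isRuntime hC)
    (htyV.isUnrCtx_of_isValue hV) (htyV.effect_false_of_isValue hV)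
  rw [ctxSubst_fill, patSubst_of_not_mem C hx, ctxSubst, if_pos rfl] at hsubst
  exact .weaken _ _ _ _ _ _ hsubst (subC_refl _) le_sup_left

end LawOrder
end
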